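/- arXiv:1202.6072 — 8 statements merged into one kernel-verified Lean document; each statement's English description precedes it below -/
import Mathlib

section
/- Let n = 1, a > 0, b₀ > 1, and define u_{a,b₀}(t,x) = a (1 + x²/((1+b₀)e^{t/2} − 1)²)^{-1} for t > 0, x ∈ ℝ. If a ≥ 1, then u_{a,b₀} is a supersolution of the equation u_t + (-Δ)^{1/2} u = u(1−u) on (0,∞)×ℝ, i.e., ∂_t u_{a,b₀} + (-Δ)^{1/2} u_{a,b₀} − u_{a,b₀}(1 − u_{a,b₀}) ≥ 0 pointwise. -/
set_option maxHeartbeats 1000000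

open Filter Topology MeasureTheory

lemma ratio_tendsto_atTop (s b c : ℝ) (hb : 0 < b) :
    Tendsto (fun y : ℝ => (s^2 + y^2) / (b^2 + (y - c)^2)) atTop (𝓝 1) := by
  have hysq : Tendsto (fun y : ℝ => y^2) atTop atTop := tendsto_pow_atTop two_ne_zero
  have h1 : Tendsto (fun y : ℝ => s^2 / y^2 + 1) atTop (𝓝 1) := by
    have := (tendsto_const_nhds (x := s^2) (f := atTop)).div_atTop hysq
    simpa using this.add (tendsto_const_nhds (x := (1:ℝ)))
  have hc : Tendsto (fun y : ℝ => c / y) atTop (𝓝 0) :=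
    (tendsto_const_nhds (x := c) (f := atTop)).div_atTop tendsto_id
  have h2 : Tendsto (fun y : ℝ => b^2 / y^2 + (1 - c/y)^2) atTop (𝓝 1) := by
    have hb2 : Tendsto (fun y : ℝ => b^2 / y^2) atTop (𝓝 0) :=
      (tendsto_const_nhds (x := b^2) (f := atTop)).div_atTop hysq
    have h3 : Tendsto (fun y : ℝ => (1 - c/y)^2) atTop (𝓝 1) := by
      have := ((tendsto_const_nhds (x := (1:ℝ)) (f := atTop)).sub hc).pow 2
      simpa using this
    simpa using hb2.add h3
  have key := h1.div h2 one_ne_zero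
  rw [div_one] at key
  apply key.congr'
  filter_upwards [eventually_gt_atTop (0:ℝ)] with y hy
  have hy' : y ≠ 0 := hy.ne'
  have hd : (0:ℝ) < b^2 + (y-c)^2 := by positivity
  simp only [Pi.div_apply]
  rw [div_eq_div_iff (by positivity) hd.ne']
  field_simp

lemma ratio_tendsto_atBot (s b c : ℝ) (hb : 0 < b) :
    Tendsto (fun y : ℝ => (s^2 + y^2) / (b^2 + (y - c)^2)) atBot (𝓝 1) := by
  have := (ratio_tendsto_atTop s b (-c) hb).comp tendsto_neg_atBot_atTop
  apply this.congr
  intro y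
  simp only [Function.comp_apply]
  ring_nf

lemma poisson_conv (s b x : ℝ) (hs : 0 < s) (hb : 0 < b) (hsb : s < b) :
    ∫ y : ℝ, s / (s ^ 2 + y ^ 2) * (b / (b ^ 2 + (x - y) ^ 2)) =
      Real.pi * (s + b) / ((s + b) ^ 2 + x ^ 2) := by
  have hsbne : s - b ≠ 0 := sub_ne_zero.mpr hsb.ne
  have hK : (0:ℝ) < ((s+b)^2 + x^2) * ((s-b)^2 + x^2) := by positivity
  set K : ℝ := ((s+b)^2 + x^2) * ((s-b)^2 + x^2) with hKdef
  have hKne : K ≠ 0 := hK.ne'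
  set c1 : ℝ := s*b*x/K with hc1
  set c2 : ℝ := b*(x^2+b^2-s^2)/K with hc2
  set c3 : ℝ := s*(s^2+x^2-b^2)/K with hc3
  set F : ℝ → ℝ := fun y => c1 * (Real.log (s^2+y^2) - Real.log (b^2+(y-x)^2))
      + c2 * Real.arctan (y/s) + c3 * Real.arctan ((y-x)/b) with hF
  have hderiv : ∀ y : ℝ, HasDerivAt F (s/(s^2+y^2) * (b/(b^2+(x-y)^2))) y := by
    intro y
    have h1 : (0:ℝ) < s^2 + y^2 := by positivity
    have h2 : (0:ℝ) < b^2 + (y-x)^2 := by positivity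
    have d1 : HasDerivAt (fun y : ℝ => Real.log (s^2+y^2)) (2*y/(s^2+y^2)) y := by
      have h : HasDerivAt (fun y : ℝ => s^2 + y^2) (2*y) y := by
        simpa using (hasDerivAt_pow 2 y).const_add (s^2)
      simpa using h.log h1.ne'
    have d2 : HasDerivAt (fun y : ℝ => Real.log (b^2+(y-x)^2)) (2*(y-x)/(b^2+(y-x)^2)) y := by
      have h : HasDerivAt (fun y : ℝ => b^2 + (y-x)^2) (2*(y-x)) y := by
        have := ((hasDerivAt_id y).sub_const x).pow 2
        simpa using this.const_add (b^2)
      simpa using h.log h2.ne'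
    have d3 : HasDerivAt (fun y : ℝ => Real.arctan (y/s)) (1/(1+(y/s)^2) * (1/s)) y := by
      have := (Real.hasDerivAt_arctan (y/s)).comp y ((hasDerivAt_id y).div_const s)
      exact this
    have d4 : HasDerivAt (fun y : ℝ => Real.arctan ((y-x)/b)) (1/(1+((y-x)/b)^2) * (1/b)) y := by
      have := (Real.hasDerivAt_arctan ((y-x)/b)).comp y
        (((hasDerivAt_id y).sub_const x).div_const b)
      exact this
    have hsum := (((d1.sub d2).const_mul c1).add (d3.const_mul c2)).add (d4.const_mul c3)
    refine hsum.congr_deriv ?_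
    symm
    rw [hc1, hc2, hc3, hKdef]
    have e1 : (1:ℝ) + (y/s)^2 ≠ 0 := by positivity
    have e2 : (1:ℝ) + ((y-x)/b)^2 ≠ 0 := by positivity
    field_simp
    ring
  have hint : Integrable (fun y : ℝ => s/(s^2+y^2) * (b/(b^2+(x-y)^2))) := by
    have hcont : Continuous fun y : ℝ => s/(s^2+y^2) * (b/(b^2+(x-y)^2)) := by
      apply Continuous.mul
      · exact continuous_const.div (continuous_const.add (continuous_pow 2))
          (fun y => by positivity)
      · exact continuous_const.div
          (continuous_const.add ((continuous_const.sub continuous_id).pow 2))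
          (fun y => by positivity)
    have hmaj : Integrable (fun y : ℝ => 1/(s*b) * (1+(y/s)^2)⁻¹) :=
      (integrable_inv_one_add_sq.comp_div hs.ne').const_mul (1/(s*b))
    apply hmaj.mono' hcont.aestronglyMeasurable
    filter_upwards with y
    rw [Real.norm_eq_abs, abs_of_nonneg (by positivity)]
    have hinv : (1+(y/s)^2)⁻¹ = s^2/(s^2+y^2) := by
      rw [inv_eq_one_div, div_eq_div_iff (by positivity) (by positivity)]
      field_simp
    rw [hinv]
    have hbb : b/(b^2+(x-y)^2) ≤ 1/b := by
      rw [div_le_div_iff₀ (by positivity) hb]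
      nlinarith [sq_nonneg (x-y)]
    calc s/(s^2+y^2) * (b/(b^2+(x-y)^2)) ≤ s/(s^2+y^2) * (1/b) := by
          apply mul_le_mul_of_nonneg_left hbb (by positivity)
      _ = 1/(s*b) * (s^2/(s^2+y^2)) := by
          field_simp
  have hlogtop : Tendsto (fun y : ℝ => Real.log (s^2+y^2) - Real.log (b^2+(y-x)^2))
      atTop (𝓝 0) := by
    have hcomp := (Real.continuousAt_log one_ne_zero).tendsto.comp (ratio_tendsto_atTop s b x hb)
    rw [Real.log_one] at hcomp
    apply hcomp.congr
    intro y
    simp only [Function.comp_apply]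
    rw [Real.log_div (by positivity) (by positivity)]
  have hlogbot : Tendsto (fun y : ℝ => Real.log (s^2+y^2) - Real.log (b^2+(y-x)^2))
      atBot (𝓝 0) := by
    have hcomp := (Real.continuousAt_log one_ne_zero).tendsto.comp (ratio_tendsto_atBot s b x hb)
    rw [Real.log_one] at hcomp
    apply hcomp.congr
    intro y
    simp only [Function.comp_apply]
    rw [Real.log_div (by positivity) (by positivity)]
  have harc1top : Tendsto (fun y : ℝ => Real.arctan (y/s)) atTop (𝓝 (Real.pi/2)) := by
    have hin : Tendsto (fun y : ℝ => y/s) atTop atTop := tendsto_id.atTop_div_const hs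
    exact (Real.tendsto_arctan_atTop.mono_right nhdsWithin_le_nhds).comp hin
  have harc1bot : Tendsto (fun y : ℝ => Real.arctan (y/s)) atBot (𝓝 (-(Real.pi/2))) := by
    have hin : Tendsto (fun y : ℝ => y/s) atBot atBot := tendsto_id.atBot_div_const hs
    exact (Real.tendsto_arctan_atBot.mono_right nhdsWithin_le_nhds).comp hin
  have harc2top : Tendsto (fun y : ℝ => Real.arctan ((y-x)/b)) atTop (𝓝 (Real.pi/2)) := by
    have hin : Tendsto (fun y : ℝ => (y-x)/b) atTop atTop :=
      (tendsto_atTop_add_const_right atTop (-x) tendsto_id).atTop_div_const hb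
    exact (Real.tendsto_arctan_atTop.mono_right nhdsWithin_le_nhds).comp hin
  have harc2bot : Tendsto (fun y : ℝ => Real.arctan ((y-x)/b)) atBot (𝓝 (-(Real.pi/2))) := by
    have hin : Tendsto (fun y : ℝ => (y-x)/b) atBot atBot :=
      (tendsto_atBot_add_const_right atBot (-x) tendsto_id).atBot_div_const hb
    exact (Real.tendsto_arctan_atBot.mono_right nhdsWithin_le_nhds).comp hin
  have htop : Tendsto F atTop (𝓝 (c1*0 + c2*(Real.pi/2) + c3*(Real.pi/2))) :=
    ((hlogtop.const_mul c1).add (harc1top.const_mul c2)).add (harc2top.const_mul c3)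
  have hbot : Tendsto F atBot (𝓝 (c1*0 + c2*(-(Real.pi/2)) + c3*(-(Real.pi/2)))) :=
    ((hlogbot.const_mul c1).add (harc1bot.const_mul c2)).add (harc2bot.const_mul c3)
  rw [MeasureTheory.integral_of_hasDerivAt_of_tendsto hderiv hint hbot htop]
  rw [hc2, hc3, hKdef]
  have hD : ((s+b)^2 + x^2) ≠ 0 := by positivity
  have hD2 : ((s-b)^2 + x^2) ≠ 0 := by positivity
  field_simp
  ring

/-- The one-dimensional Poisson kernel `p_{1/2}(t,x) = (1/π) t / (t² + x²)`. -/
noncomputable def poissonKernelR (t x : ℝ) : ℝ := (1 / Real.pi) * t / (t ^ 2 + x ^ 2)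

/-- `u : ℝ → ℝ` has half-Laplacian `(-Δ)^{1/2} u (x) = L` at `x`, defined through the
generator of the Poisson semigroup. -/
def HasHalfLapAt (u : ℝ → ℝ) (x L : ℝ) : Prop :=
  Tendsto (fun t : ℝ => (u x - ∫ y, poissonKernelR t y * u (x - y)) / t)
    (𝓝[>] (0 : ℝ)) (𝓝 L)

/-- The comparison function `u_{a,b₀}(t,x) = a (1 + x²/((1+b₀)e^{t/2} − 1)²)^{-1}`. -/
noncomputable def uComp (a b₀ t x : ℝ) : ℝ :=
  a * (1 + x ^ 2 / ((1 + b₀) * Real.exp (t / 2) - 1) ^ 2)⁻¹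

theorem statement_1 (a b₀ : ℝ) (ha : 1 ≤ a) (hb₀ : 1 < b₀)
    (t x : ℝ) (ht : 0 < t) (ut L : ℝ)
    (hdt : HasDerivAt (fun s => uComp a b₀ s x) ut t)
    (hhl : HasHalfLapAt (fun y => uComp a b₀ t y) x L) :
    0 ≤ ut + L - uComp a b₀ t x * (1 - uComp a b₀ t x) := by
  have hE : 1 < Real.exp (t/2) := by
    have := Real.add_one_le_exp (t/2)
    nlinarith
  set b : ℝ := (1 + b₀) * Real.exp (t/2) - 1 with hbdef
  have hb : 1 < b := by
    have : (2:ℝ) < (1 + b₀) * Real.exp (t/2) := by nlinarith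
    simp only [hbdef]; linarith
  have hb0 : (0:ℝ) < b := lt_trans one_pos hb
  have hS : (0:ℝ) < b^2 + x^2 := by positivity
  -- value of u at (t,x)
  have hu : uComp a b₀ t x = a * b^2 / (b^2 + x^2) := by
    simp only [uComp, ← hbdef]
    rw [mul_div_assoc]
    congr 1
    rw [inv_eq_one_div, div_eq_div_iff (by positivity) hS.ne']
    field_simp
  -- time derivative
  have hbfun : HasDerivAt (fun s : ℝ => (1 + b₀) * Real.exp (s/2) - 1) ((b+1)/2) t := by
    have h0 : HasDerivAt (fun s : ℝ => Real.exp (s/2)) (Real.exp (t/2) * (1/2)) t := by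
      have := (Real.hasDerivAt_exp (t/2)).comp t ((hasDerivAt_id t).div_const 2)
      exact this
    have h1 := (h0.const_mul (1 + b₀)).sub_const 1
    refine h1.congr_deriv ?_
    symm
    simp only [hbdef]; ring
  have hderiv : HasDerivAt (fun s => uComp a b₀ s x)
      (a * (b*(b+1)*x^2 / ((b^2+x^2)^2))) t := by
    simp only [uComp]
    have hsq : HasDerivAt (fun s : ℝ => ((1 + b₀) * Real.exp (s/2) - 1)^2)
        (2*b*((b+1)/2)) t := by
      have := hbfun.pow 2
      simp only [← hbdef] at this
      refine this.congr_deriv ?_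
      symm
      ring
    have hq := (hasDerivAt_const t (x^2)).div hsq (by
      simp only [← hbdef]; positivity)
    simp only [← hbdef] at hq
    have hne : (1 : ℝ) + x^2 / b^2 ≠ 0 := by positivity
    have hinv := ((hq.const_add 1).inv (by
      simpa using hne)).const_mul a
    refine hinv.congr_deriv ?_
    symm
    have hb2 : (b:ℝ)^2 ≠ 0 := by positivity
    simp only [Pi.div_apply, ← hbdef]
    field_simp
    ring
  have hut : ut = a * (b*(b+1)*x^2 / ((b^2+x^2)^2)) := hdt.unique hderiv
  -- half-Laplacian value
  have hI : ∀ s : ℝ, 0 < s → s < b →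
      (∫ y, poissonKernelR s y * uComp a b₀ t (x - y))
        = a * b * (s + b) / ((s+b)^2 + x^2) := by
    intro s hs hsb
    have hptwise : ∀ y : ℝ, poissonKernelR s y * uComp a b₀ t (x - y)
        = (a * b / Real.pi) * (s/(s^2+y^2) * (b/(b^2+(x-y)^2))) := by
      intro y
      simp only [poissonKernelR, uComp, ← hbdef]
      have h1 : (0:ℝ) < s^2 + y^2 := by positivity
      have h2 : (0:ℝ) < b^2 + (x-y)^2 := by positivity
      have hinv : (1 + (x-y)^2 / b^2)⁻¹ = b^2 / (b^2 + (x-y)^2) := by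
        rw [inv_eq_one_div, div_eq_div_iff (by positivity) h2.ne']
        field_simp
      rw [hinv]
      field_simp
    rw [MeasureTheory.integral_congr_ae (Filter.Eventually.of_forall hptwise),
      MeasureTheory.integral_const_mul, poisson_conv s b x hs hb0 hsb]
    have hpi : Real.pi ≠ 0 := Real.pi_ne_zero
    field_simp
  -- the slope function
  set g : ℝ → ℝ := fun s => a * b^2 / (b^2 + x^2) - a * b * (s + b) / ((s+b)^2 + x^2)
    with hg
  have hg0 : g 0 = 0 := by
    simp only [hg, zero_add]
    ring
  have hgd : HasDerivAt g (a*b*(b^2 - x^2) / ((b^2+x^2)^2)) 0 := by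
    have hnum : HasDerivAt (fun s : ℝ => a * b * (s + b)) (a*b) 0 := by
      simpa using ((hasDerivAt_id (0:ℝ)).add_const b).const_mul (a*b)
    have hden : HasDerivAt (fun s : ℝ => (s+b)^2 + x^2) (2*b) 0 := by
      have := (((hasDerivAt_id (0:ℝ)).add_const b).pow 2).add_const (x^2)
      simpa using this
    have hne : ((0:ℝ)+b)^2 + x^2 ≠ 0 := by positivity
    have := (hnum.div hden hne).const_sub (a * b^2 / (b^2 + x^2))
    refine this.congr_deriv ?_
    symm
    rw [zero_add]
    field_simp
    ring
  have hslope : Tendsto (fun s => g s / s) (𝓝[>] (0:ℝ))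
      (𝓝 (a*b*(b^2 - x^2) / ((b^2+x^2)^2))) := by
    have h1 := hasDerivAt_iff_tendsto_slope.mp hgd
    have h2 : 𝓝[>] (0:ℝ) ≤ 𝓝[≠] (0:ℝ) :=
      nhdsWithin_mono 0 (fun y hy => ne_of_gt hy)
    apply (h1.mono_left h2).congr
    intro s
    rw [slope_def_field, hg0]
    simp [div_eq_mul_inv]
  have hev : (fun s : ℝ => ((fun y => uComp a b₀ t y) x
        - ∫ y, poissonKernelR s y * (fun y => uComp a b₀ t y) (x - y)) / s)
      =ᶠ[𝓝[>] (0:ℝ)] fun s => g s / s := by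
    have h1 : ∀ᶠ s : ℝ in 𝓝[>] (0:ℝ), s < 1 :=
      (eventually_lt_nhds one_pos).filter_mono nhdsWithin_le_nhds
    filter_upwards [self_mem_nhdsWithin, h1] with s hs hs1
    have hsb : s < b := lt_trans hs1 hb
    rw [hI s hs hsb, hu]
  have hL : L = a*b*(b^2 - x^2) / ((b^2+x^2)^2) :=
    tendsto_nhds_unique hhl (hslope.congr' hev.symm)
  -- final inequality
  rw [hut, hL, hu]
  have key : a * (b*(b+1)*x^2 / ((b^2+x^2)^2)) + a*b*(b^2 - x^2) / ((b^2+x^2)^2)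
      - a * b^2 / (b^2 + x^2) * (1 - a * b^2 / (b^2 + x^2))
      = a * b^2 * (b + (a-1)*b^2) / ((b^2+x^2)^2) := by
    field_simp
    ring
  rw [key]
  apply div_nonneg _ (by positivity)
  have h1 : 0 ≤ b + (a-1)*b^2 := by nlinarith
  exact mul_nonneg (mul_nonneg (by linarith) (sq_nonneg b)) h1
end

section
/- Let n = 1, a > 0, b₀ > 1, and define u_{a,b₀}(t,x) = a (1 + x²/((1+b₀)e^{t/2} − 1)²)^{-1} for t > 0, x ∈ ℝ. If a ≤ (b₀−1)/b₀, then u_{a,b₀} is a subsolution of u_t + (-Δ)^{1/2} u = u(1−u) on (0,∞)×ℝ, i.e., ∂_t u_{a,b₀} + (-Δ)^{1/2} u_{a,b₀} − u_{a,b₀}(1 − u_{a,b₀}) ≤ 0 pointwise. -/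
open Filter Topology MeasureTheory

section aux

open Real

/-- Ratio of quadratics tends to 1. -/
lemma ratio_lim (c d e : ℝ) (hd : d ≠ 0) (l : Filter ℝ)
    (h : Tendsto (fun y : ℝ => y⁻¹) l (𝓝 0)) (h' : ∀ᶠ y in l, y ≠ 0) :
    Tendsto (fun y : ℝ => (c ^ 2 + y ^ 2) / (d ^ 2 + (e - y) ^ 2)) l (𝓝 1) := by
  have hnum : Tendsto (fun y : ℝ => (c * y⁻¹) ^ 2 + 1) l (𝓝 1) := by
    have := (((h.const_mul c).pow 2).add_const 1)
    simpa using this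
  have hden : Tendsto (fun y : ℝ => (d * y⁻¹) ^ 2 + (e * y⁻¹ - 1) ^ 2) l (𝓝 1) := by
    have := ((h.const_mul d).pow 2).add ((((h.const_mul e).sub_const 1)).pow 2)
    simpa using this
  have key := hnum.div hden (by norm_num)
  rw [show (1 : ℝ) / 1 = 1 by norm_num] at key
  apply key.congr'
  filter_upwards [h'] with y hy
  have hy2 : y ^ 2 ≠ 0 := pow_ne_zero 2 hy
  have hdd : d ^ 2 + (e - y) ^ 2 ≠ 0 := by positivity
  simp only [Pi.div_apply]
  field_simp

lemma inv_atBot : Tendsto (fun y : ℝ => y⁻¹) atBot (𝓝 0) := by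
  have h1 : Tendsto (fun y : ℝ => -y) atBot atTop := tendsto_neg_atBot_atTop
  have h2 : Tendsto (fun y : ℝ => (-y)⁻¹) atBot (𝓝 0) := tendsto_inv_atTop_zero.comp h1
  have h3 := h2.neg
  rw [neg_zero] at h3
  refine h3.congr fun y => ?_
  rw [inv_neg, neg_neg]

/-- The key convolution integral: Poisson kernel against a Cauchy profile. -/
lemma cauchy_conv (t b x : ℝ) (ht : 0 < t) (hb : 0 < b) (htb : t ≠ b) :
    (∫ y : ℝ, poissonKernelR t y * (b ^ 2 / (b ^ 2 + (x - y) ^ 2)))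
      = b * (t + b) / ((t + b) ^ 2 + x ^ 2) := by
  have hπ : (0:ℝ) < π := pi_pos
  have htb' : t - b ≠ 0 := sub_ne_zero.2 htb
  set D : ℝ := ((t + b) ^ 2 + x ^ 2) * ((t - b) ^ 2 + x ^ 2) with hDdef
  have hD : 0 < D := by positivity
  set A : ℝ := b * (x ^ 2 + b ^ 2 - t ^ 2) / D with hAdef
  set B : ℝ := 2 * t * b * x / D with hBdef
  set C : ℝ := t * (x ^ 2 + t ^ 2 - b ^ 2) / D with hCdef
  set g : ℝ → ℝ := fun y => t * b / ((t ^ 2 + y ^ 2) * (b ^ 2 + (x - y) ^ 2)) with hgdef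
  set F : ℝ → ℝ := fun y => A * arctan (y / t) + C * arctan ((y - x) / b)
      + (B / 2) * (Real.log (t ^ 2 + y ^ 2) - Real.log (b ^ 2 + (x - y) ^ 2)) with hFdef
  have hden1 : ∀ y : ℝ, (0:ℝ) < t ^ 2 + y ^ 2 := fun y => by positivity
  have hden2 : ∀ y : ℝ, (0:ℝ) < b ^ 2 + (x - y) ^ 2 := fun y => by positivity
  -- derivative of F
  have hderiv : ∀ y, HasDerivAt F (g y) y := by
    intro y
    have h1 : HasDerivAt (fun y : ℝ => arctan (y / t)) (t / (t ^ 2 + y ^ 2)) y := by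
      have := (Real.hasDerivAt_arctan (y / t)).comp y ((hasDerivAt_id y).div_const t)
      refine this.congr_deriv ?_
      field_simp
    have h2 : HasDerivAt (fun y : ℝ => arctan ((y - x) / b)) (b / (b ^ 2 + (x - y) ^ 2)) y := by
      have := (Real.hasDerivAt_arctan ((y - x) / b)).comp y
        (((hasDerivAt_id y).sub_const x).div_const b)
      refine this.congr_deriv ?_
      rw [show (x - y) ^ 2 = (y - x) ^ 2 by ring]
      field_simp
    have h3 : HasDerivAt (fun y : ℝ => Real.log (t ^ 2 + y ^ 2))
        (2 * y / (t ^ 2 + y ^ 2)) y := by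
      have hin : HasDerivAt (fun y : ℝ => t ^ 2 + y ^ 2) (2 * y) y := by
        simpa using ((hasDerivAt_pow 2 y).const_add (t ^ 2))
      have := (Real.hasDerivAt_log (hden1 y).ne').comp y hin
      refine this.congr_deriv ?_
      field_simp
    have h4 : HasDerivAt (fun y : ℝ => Real.log (b ^ 2 + (x - y) ^ 2))
        (-(2 * (x - y)) / (b ^ 2 + (x - y) ^ 2)) y := by
      have hin : HasDerivAt (fun y : ℝ => b ^ 2 + (x - y) ^ 2) (-(2 * (x - y))) y := by
        have h0 : HasDerivAt (fun y : ℝ => x - y) (-1 : ℝ) y := by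
          simpa using ((hasDerivAt_id y).const_sub x)
        have := (h0.pow 2).const_add (b ^ 2)
        refine this.congr_deriv ?_
        simp
      have := (Real.hasDerivAt_log (hden2 y).ne').comp y hin
      refine this.congr_deriv ?_
      field_simp
    have hsum := ((h1.const_mul A).add (h2.const_mul C)).add
      ((h3.sub h4).const_mul (B / 2))
    refine hsum.congr_deriv ?_
    rw [hgdef, hAdef, hBdef, hCdef]
    have e1 := (hden1 y).ne'
    have e2 := (hden2 y).ne'
    field_simp
    ring
  -- integrability of g
  have hgint : Integrable g := by
    have hint0 : Integrable (fun y : ℝ => (1 + (t⁻¹ * y) ^ 2)⁻¹) :=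
      integrable_inv_one_add_sq.comp_mul_left' (inv_ne_zero ht.ne')
    have hint : Integrable (fun y : ℝ => (t * b / b ^ 2) * (t ^ 2 + y ^ 2)⁻¹) := by
      apply Integrable.const_mul
      have h5 := hint0.const_mul (t ^ 2)⁻¹
      refine h5.congr (Filter.Eventually.of_forall fun y => ?_)
      have : t ^ 2 + y ^ 2 ≠ 0 := (hden1 y).ne'
      field_simp
    apply hint.mono' ?_ ?_
    · apply Continuous.aestronglyMeasurable
      apply Continuous.div continuous_const
      · fun_prop
      · intro y; exact (mul_pos (hden1 y) (hden2 y)).ne'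
    · filter_upwards with y
      rw [Real.norm_eq_abs, abs_of_nonneg (by positivity)]
      rw [hgdef]
      rw [div_le_iff₀ (by positivity)]
      have hb2 : b ^ 2 ≤ b ^ 2 + (x - y) ^ 2 := by nlinarith [sq_nonneg (x - y)]
      have h1 : (0:ℝ) < t ^ 2 + y ^ 2 := hden1 y
      calc t * b = (t * b / b ^ 2) * ((t ^ 2 + y ^ 2)⁻¹ * ((t ^ 2 + y ^ 2) * b ^ 2)) := by
            field_simp
        _ ≤ (t * b / b ^ 2) * ((t ^ 2 + y ^ 2)⁻¹ * ((t ^ 2 + y ^ 2) * (b ^ 2 + (x - y) ^ 2))) := by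
            apply mul_le_mul_of_nonneg_left ?_ (by positivity)
            apply mul_le_mul_of_nonneg_left ?_ (by positivity)
            exact mul_le_mul_of_nonneg_left hb2 h1.le
        _ = (t * b / b ^ 2) * (t ^ 2 + y ^ 2)⁻¹ * ((t ^ 2 + y ^ 2) * (b ^ 2 + (x - y) ^ 2)) := by
            ring
  -- limits of F at ±∞
  have harct_top : Tendsto (fun y : ℝ => arctan (y / t)) atTop (𝓝 (π / 2)) :=
    (tendsto_nhds_of_tendsto_nhdsWithin tendsto_arctan_atTop).comp
      (tendsto_id.atTop_div_const ht)
  have harct_bot : Tendsto (fun y : ℝ => arctan (y / t)) atBot (𝓝 (-(π / 2))) :=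
    (tendsto_nhds_of_tendsto_nhdsWithin tendsto_arctan_atBot).comp
      (tendsto_id.atBot_div_const ht)
  have harct2_top : Tendsto (fun y : ℝ => arctan ((y - x) / b)) atTop (𝓝 (π / 2)) :=
    (tendsto_nhds_of_tendsto_nhdsWithin tendsto_arctan_atTop).comp
      ((tendsto_atTop_add_const_right atTop (-x) tendsto_id).atTop_div_const hb)
  have harct2_bot : Tendsto (fun y : ℝ => arctan ((y - x) / b)) atBot (𝓝 (-(π / 2))) :=
    (tendsto_nhds_of_tendsto_nhdsWithin tendsto_arctan_atBot).comp
      ((tendsto_atBot_add_const_right atBot (-x) tendsto_id).atBot_div_const hb)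
  have hlog : ∀ l : Filter ℝ, Tendsto (fun y : ℝ => y⁻¹) l (𝓝 0) → (∀ᶠ y in l, y ≠ 0) →
      Tendsto (fun y : ℝ => Real.log (t ^ 2 + y ^ 2) - Real.log (b ^ 2 + (x - y) ^ 2)) l
        (𝓝 0) := by
    intro l hinv hne
    have hr := ratio_lim t b x hb.ne' l hinv hne
    have hcont : Tendsto (fun z : ℝ => Real.log z) (𝓝 1) (𝓝 0) := by
      have := (Real.continuousAt_log one_ne_zero).tendsto
      simpa using this
    have := hcont.comp hr
    apply this.congr
    intro y
    simp only [Function.comp]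
    rw [Real.log_div (hden1 y).ne' (hden2 y).ne']
  have hlog_top := hlog atTop tendsto_inv_atTop_zero
    (eventually_atTop.2 ⟨1, fun y hy => by linarith⟩)
  have hlog_bot := hlog atBot inv_atBot
    (eventually_atBot.2 ⟨-1, fun y hy => by linarith⟩)
  have hFtop : Tendsto F atTop (𝓝 (A * (π / 2) + C * (π / 2) + (B / 2) * 0)) := by
    exact ((harct_top.const_mul A).add (harct2_top.const_mul C)).add (hlog_top.const_mul (B / 2))
  have hFbot : Tendsto F atBot (𝓝 (A * (-(π / 2)) + C * (-(π / 2)) + (B / 2) * 0)) := by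
    exact ((harct_bot.const_mul A).add (harct2_bot.const_mul C)).add (hlog_bot.const_mul (B / 2))
  have hint_g : (∫ y : ℝ, g y)
      = (A * (π / 2) + C * (π / 2) + (B / 2) * 0) - (A * (-(π / 2)) + C * (-(π / 2)) + (B / 2) * 0) :=
    integral_of_hasDerivAt_of_tendsto hderiv hgint hFbot hFtop
  have hint_g' : (∫ y : ℝ, g y) = (A + C) * π := by rw [hint_g]; ring
  have hAC : (A + C) * π = (t + b) / ((t + b) ^ 2 + x ^ 2) * π := by
    rw [hAdef, hCdef, hDdef]
    have h1 : ((t + b) ^ 2 + x ^ 2 : ℝ) ≠ 0 := by positivity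
    have h2 : ((t - b) ^ 2 + x ^ 2 : ℝ) ≠ 0 := by positivity
    field_simp
    ring
  have hfun : (fun y : ℝ => poissonKernelR t y * (b ^ 2 / (b ^ 2 + (x - y) ^ 2)))
      = fun y => (b / π) * g y := by
    funext y
    rw [poissonKernelR, hgdef]
    have e1 := (hden1 y).ne'
    have e2 := (hden2 y).ne'
    field_simp
  rw [hfun, integral_const_mul, hint_g', hAC]
  field_simp

end aux

theorem statement_2 (a b₀ : ℝ) (ha : 0 < a) (ha2 : a ≤ (b₀ - 1) / b₀) (hb₀ : 1 < b₀)
    (t x : ℝ) (ht : 0 < t) (ut L : ℝ)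
    (hdt : HasDerivAt (fun s => uComp a b₀ s x) ut t)
    (hhl : HasHalfLapAt (fun y => uComp a b₀ t y) x L) :
    ut + L - uComp a b₀ t x * (1 - uComp a b₀ t x) ≤ 0 := by
  set b : ℝ := (1 + b₀) * Real.exp (t / 2) - 1 with hbdef
  have hexp : 1 < Real.exp (t / 2) := by
    rw [show (1:ℝ) = Real.exp 0 by simp]
    exact Real.exp_lt_exp.2 (by linarith)
  have hb : b₀ < b := by
    rw [hbdef]
    nlinarith
  have hb1 : 1 < b := lt_trans hb₀ hb
  have hb0 : 0 < b := by linarith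
  have hbx : (0:ℝ) < b ^ 2 + x ^ 2 := by positivity
  -- value of u at (t, x)
  have hu : uComp a b₀ t x = a * b ^ 2 / (b ^ 2 + x ^ 2) := by
    rw [uComp, ← hbdef]
    rw [show (1 + x ^ 2 / b ^ 2) = (b ^ 2 + x ^ 2) / b ^ 2 by field_simp]
    field_simp
  -- Step 1: identify L
  have hL : L = a * b * (b ^ 2 - x ^ 2) / (b ^ 2 + x ^ 2) ^ 2 := by
    have hphi : Tendsto (fun s : ℝ => a * b * (b ^ 2 + b * s - x ^ 2)
        / ((b ^ 2 + x ^ 2) * ((s + b) ^ 2 + x ^ 2))) (𝓝[>] (0:ℝ))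
        (𝓝 (a * b * (b ^ 2 - x ^ 2) / (b ^ 2 + x ^ 2) ^ 2)) := by
      have hc : ContinuousAt (fun s : ℝ => a * b * (b ^ 2 + b * s - x ^ 2)
          / ((b ^ 2 + x ^ 2) * ((s + b) ^ 2 + x ^ 2))) 0 := by
        apply ContinuousAt.div
        · fun_prop
        · fun_prop
        · simp only [zero_add]
          positivity
      have h2 := hc.tendsto.mono_left (nhdsWithin_le_nhds : 𝓝[>] (0:ℝ) ≤ 𝓝 0)
      have hval : a * b * (b ^ 2 + b * 0 - x ^ 2) / ((b ^ 2 + x ^ 2) * ((0 + b) ^ 2 + x ^ 2))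
          = a * b * (b ^ 2 - x ^ 2) / (b ^ 2 + x ^ 2) ^ 2 := by
        rw [mul_zero, add_zero, zero_add]; ring
      rw [← hval]
      exact h2
    have heq : (fun s : ℝ => ((fun y => uComp a b₀ t y) x
        - ∫ y, poissonKernelR s y * (fun y => uComp a b₀ t y) (x - y)) / s)
        =ᶠ[𝓝[>] (0:ℝ)] (fun s : ℝ => a * b * (b ^ 2 + b * s - x ^ 2)
        / ((b ^ 2 + x ^ 2) * ((s + b) ^ 2 + x ^ 2))) := by
      have hmem : Set.Ioo (0:ℝ) 1 ∈ 𝓝[>] (0:ℝ) :=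
        Ioo_mem_nhdsGT_of_mem (by norm_num : (0:ℝ) ∈ Set.Ico (0:ℝ) 1)
      filter_upwards [hmem] with s hs
      obtain ⟨hs0, hs1⟩ := hs
      have hsb : s ≠ b := by intro h; rw [h] at hs1; linarith
      have hint : (∫ y, poissonKernelR s y * uComp a b₀ t (x - y))
          = a * (b * (s + b) / ((s + b) ^ 2 + x ^ 2)) := by
        have hfun2 : (fun y : ℝ => poissonKernelR s y * uComp a b₀ t (x - y))
            = fun y => a * (poissonKernelR s y * (b ^ 2 / (b ^ 2 + (x - y) ^ 2))) := by
          funext y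
          rw [uComp, ← hbdef]
          rw [show (1 + (x - y) ^ 2 / b ^ 2) = (b ^ 2 + (x - y) ^ 2) / b ^ 2 by
            field_simp]
          have : (0:ℝ) < b ^ 2 + (x - y) ^ 2 := by positivity
          field_simp
        rw [hfun2, integral_const_mul, cauchy_conv s b x hs0 hb0 hsb]
      rw [hint, hu]
      have hsb2 : (0:ℝ) < (s + b) ^ 2 + x ^ 2 := by positivity
      field_simp
      ring
    have := hhl
    rw [HasHalfLapAt] at this
    exact tendsto_nhds_unique (this.congr' heq) hphi
  -- Step 2: identify ut
  have hut : ut = a * x ^ 2 * (b + 1) * b / (b ^ 2 + x ^ 2) ^ 2 := by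
    have hB : HasDerivAt (fun s : ℝ => (1 + b₀) * Real.exp (s / 2) - 1)
        ((1 + b₀) * Real.exp (t / 2) * (1 / 2)) t := by
      have h0 : HasDerivAt (fun s : ℝ => s / 2) (1 / 2 : ℝ) t := by
        simpa using (hasDerivAt_id t).div_const 2
      have := ((Real.hasDerivAt_exp (t / 2)).comp t h0).const_mul (1 + b₀)
      have := this.sub_const 1
      refine this.congr_deriv ?_
      ring
    have hB2 : HasDerivAt (fun s : ℝ => ((1 + b₀) * Real.exp (s / 2) - 1) ^ 2)
        (2 * b * ((1 + b₀) * Real.exp (t / 2) * (1 / 2))) t := by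
      have := hB.pow 2
      refine this.congr_deriv ?_
      rw [← hbdef]
      ring
    have hq : HasDerivAt (fun s : ℝ => x ^ 2 / ((1 + b₀) * Real.exp (s / 2) - 1) ^ 2)
        ((0 * b ^ 2 - x ^ 2 * (2 * b * ((1 + b₀) * Real.exp (t / 2) * (1 / 2)))) / (b ^ 2) ^ 2)
        t := by
      have := (hasDerivAt_const t (x ^ 2)).div hB2 (by rw [← hbdef]; positivity)
      refine this.congr_deriv ?_; rw [← hbdef]
    have hg : HasDerivAt (fun s : ℝ => 1 + x ^ 2 / ((1 + b₀) * Real.exp (s / 2) - 1) ^ 2)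
        ((0 * b ^ 2 - x ^ 2 * (2 * b * ((1 + b₀) * Real.exp (t / 2) * (1 / 2)))) / (b ^ 2) ^ 2)
        t := hq.const_add 1
    have hpos : 1 + x ^ 2 / ((1 + b₀) * Real.exp (t / 2) - 1) ^ 2 ≠ 0 := by
      rw [← hbdef]; positivity
    have hinv := (hg.inv hpos).const_mul a
    simp only [uComp] at hdt
    have huniq := hdt.unique hinv
    rw [huniq]
    rw [← hbdef]
    have hE : (1 + b₀) * Real.exp (t / 2) = b + 1 := by rw [hbdef]; ring
    rw [hE]
    have h1 : (1 + x ^ 2 / b ^ 2) = (b ^ 2 + x ^ 2) / b ^ 2 := by field_simp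
    rw [h1]
    field_simp
    ring
  -- Step 3: final inequality
  rw [hu, hL, hut]
  have key : a * x ^ 2 * (b + 1) * b / (b ^ 2 + x ^ 2) ^ 2
      + a * b * (b ^ 2 - x ^ 2) / (b ^ 2 + x ^ 2) ^ 2
      - a * b ^ 2 / (b ^ 2 + x ^ 2) * (1 - a * b ^ 2 / (b ^ 2 + x ^ 2))
      = a * b ^ 3 * (1 - b + a * b) / (b ^ 2 + x ^ 2) ^ 2 := by
    field_simp
    ring
  rw [key]
  apply div_nonpos_of_nonpos_of_nonneg _ (by positivity)
  have hab : 1 - b + a * b ≤ 0 := by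
    have h1 : a ≤ 1 - 1 / b₀ := by
      rw [show (b₀ - 1) / b₀ = 1 - 1 / b₀ by field_simp] at ha2
      exact ha2
    have h2 : 1 / b ≤ 1 / b₀ := by
      apply one_div_le_one_div_of_le (by linarith) hb.le
    have h3 : a ≤ 1 - 1 / b := by linarith
    have := mul_le_mul_of_nonneg_right h3 hb0.le
    rw [sub_mul, one_mul, div_mul_cancel₀ 1 hb0.ne'] at this
    linarith
  exact mul_nonpos_of_nonneg_of_nonpos (by positivity) hab
end

section
/- Let u ∈ C¹(ℝⁿ) ∩ L¹(ℝⁿ) and v ∈ L^∞(ℝⁿ) be positive, radially symmetric, radially nonincreasing functions, with the radial derivative of u in L¹(ℝⁿ). Then the convolution u ∗ v is positive, radially symmetric, and radially nonincreasing. -/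
open MeasureTheory

private lemma aux_rearrange (A B V W : ℝ) (h1 : B ≤ A) (h2 : W ≤ V) :
    B * V + A * W ≤ A * V + B * W := by nlinarith [mul_nonneg (sub_nonneg.2 h1) (sub_nonneg.2 h2)]

theorem statement_3 (n : ℕ) (hn : 1 ≤ n)
    (u v : EuclideanSpace ℝ (Fin n) → ℝ)
    (hu_pos : ∀ x, 0 < u x) (hv_pos : ∀ x, 0 < v x)
    (hu_c1 : ContDiff ℝ 1 u) (hu_int : Integrable u)
    (hu'_int : Integrable (fun x => ‖fderiv ℝ u x‖))
    (hv_meas : Measurable v) (hv_bdd : ∃ C, ∀ x, v x ≤ C)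
    (hu_rad : ∀ x y, ‖x‖ = ‖y‖ → u x = u y)
    (hu_mono : ∀ x y, ‖x‖ ≤ ‖y‖ → u y ≤ u x)
    (hv_rad : ∀ x y, ‖x‖ = ‖y‖ → v x = v y)
    (hv_mono : ∀ x y, ‖x‖ ≤ ‖y‖ → v y ≤ v x) :
    (∀ x, 0 < ∫ y, u (x - y) * v y) ∧
    (∀ x y, ‖x‖ = ‖y‖ → (∫ z, u (x - z) * v z) = ∫ z, u (y - z) * v z) ∧
    (∀ x y, ‖x‖ ≤ ‖y‖ → (∫ z, u (y - z) * v z) ≤ ∫ z, u (x - z) * v z) := by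
  obtain ⟨C, hC⟩ := hv_bdd
  -- integrability of the integrand
  have hInt : ∀ x : EuclideanSpace ℝ (Fin n), Integrable (fun z => u (x - z) * v z) := by
    intro x
    have h1 : Integrable (fun z => u (x - z)) := hu_int.comp_sub_left x
    have h2 := h1.bdd_mul hv_meas.aestronglyMeasurable
      (c := C) (Filter.Eventually.of_forall fun z => by rw [Real.norm_eq_abs, abs_of_pos (hv_pos z)]; exact hC z)
    simpa [mul_comm] using h2
  -- part 2 : radial symmetry via a reflection
  have part2 : ∀ x y : EuclideanSpace ℝ (Fin n), ‖x‖ = ‖y‖ →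
      (∫ z, u (x - z) * v z) = ∫ z, u (y - z) * v z := by
    intro x y hxy
    set R : EuclideanSpace ℝ (Fin n) ≃ₗᵢ[ℝ] EuclideanSpace ℝ (Fin n) :=
      Submodule.reflection (ℝ ∙ (x - y))ᗮ with hRdef
    have hRx : R x = y := Submodule.reflection_sub hxy
    have key : ∀ w, u (y - R w) * v (R w) = u (x - w) * v w := by
      intro w
      have h1 : u (y - R w) = u (x - w) := by
        apply hu_rad
        have h : y - R w = R (x - w) := by rw [map_sub, hRx]
        rw [h, R.norm_map]
      have h2 : v (R w) = v w := hv_rad _ _ (R.norm_map w)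
      rw [h1, h2]
    calc (∫ z, u (x - z) * v z) = ∫ w, u (y - R w) * v (R w) := by
          simp_rw [key]
      _ = ∫ z, u (y - z) * v z :=
          R.measurePreserving.integral_comp R.toHomeomorph.measurableEmbedding
            (fun z => u (y - z) * v z)
  -- a unit vector
  set e : EuclideanSpace ℝ (Fin n) := EuclideanSpace.single (⟨0, hn⟩ : Fin n) (1:ℝ) with he
  have he1 : ‖e‖ = 1 := by simp [he, EuclideanSpace.norm_single]
  -- core monotonicity along the ray spanned by e
  have core : ∀ d₁ d₂ : ℝ, 0 ≤ d₁ → d₁ ≤ d₂ →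
      (∫ z, u (d₂ • e - z) * v z) ≤ ∫ z, u (d₁ • e - z) * v z := by
    intro d₁ d₂ hd1 hd12
    have hd2 : 0 ≤ d₂ := hd1.trans hd12
    set a : EuclideanSpace ℝ (Fin n) := d₁ • e with ha
    set b : EuclideanSpace ℝ (Fin n) := d₂ • e with hb
    set c : EuclideanSpace ℝ (Fin n) := a + b with hc
    have pointwise : ∀ z, u (b - z) * v z + u (b - (c - z)) * v (c - z)
        ≤ u (a - z) * v z + u (a - (c - z)) * v (c - z) := by
      intro z
      have e1 : b - (c - z) = z - a := by rw [hc]; abel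
      have e2 : a - (c - z) = z - b := by rw [hc]; abel
      rw [e1, e2, hu_rad (z - a) (a - z) (norm_sub_rev _ _),
        hu_rad (z - b) (b - z) (norm_sub_rev _ _)]
      set t : ℝ := inner ℝ e z with ht
      have hip_a : (inner ℝ a z : ℝ) = d₁ * t := real_inner_smul_left e z d₁
      have hip_b : (inner ℝ b z : ℝ) = d₂ * t := real_inner_smul_left e z d₂
      have hna : ‖a‖ = d₁ := by
        rw [ha, norm_smul, he1, Real.norm_eq_abs, abs_of_nonneg hd1, mul_one]
      have hnb : ‖b‖ = d₂ := by
        rw [hb, norm_smul, he1, Real.norm_eq_abs, abs_of_nonneg hd2, mul_one]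
      have hsq1 : ‖b - z‖ ^ 2 - ‖a - z‖ ^ 2 = (d₂ - d₁) * (d₁ + d₂ - 2 * t) := by
        rw [norm_sub_sq_real, norm_sub_sq_real, hip_a, hip_b, hna, hnb]; ring
      have hsq2 : ‖c - z‖ ^ 2 - ‖z‖ ^ 2 = (d₁ + d₂) * (d₁ + d₂ - 2 * t) := by
        have hcc : c = (d₁ + d₂) • e := by rw [hc, ha, hb, add_smul]
        have hnc : ‖c‖ = d₁ + d₂ := by
          rw [hcc, norm_smul, he1, Real.norm_eq_abs, abs_of_nonneg (by linarith), mul_one]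
        have hip_c : (inner ℝ c z : ℝ) = (d₁ + d₂) * t := by
          rw [hcc]; exact real_inner_smul_left e z _
        rw [norm_sub_sq_real, hip_c, hnc]; ring
      rcases le_or_gt 0 (d₁ + d₂ - 2 * t) with hs | hs
      · have hP1 : 0 ≤ (d₂ - d₁) * (d₁ + d₂ - 2 * t) := mul_nonneg (by linarith) hs
        have hP2 : 0 ≤ (d₁ + d₂) * (d₁ + d₂ - 2 * t) := mul_nonneg (by linarith) hs
        have h1 : u (b - z) ≤ u (a - z) :=
          hu_mono _ _ (le_of_pow_le_pow_left₀ two_ne_zero (norm_nonneg _) (by linarith))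
        have h2 : v (c - z) ≤ v z :=
          hv_mono _ _ (le_of_pow_le_pow_left₀ two_ne_zero (norm_nonneg _) (by linarith))
        exact aux_rearrange _ _ _ _ h1 h2
      · have hP1 : (d₂ - d₁) * (d₁ + d₂ - 2 * t) ≤ 0 :=
          mul_nonpos_iff.2 (Or.inl ⟨by linarith, by linarith⟩)
        have hP2 : (d₁ + d₂) * (d₁ + d₂ - 2 * t) ≤ 0 :=
          mul_nonpos_iff.2 (Or.inl ⟨by linarith, by linarith⟩)
        have h1 : u (a - z) ≤ u (b - z) :=
          hu_mono _ _ (le_of_pow_le_pow_left₀ two_ne_zero (norm_nonneg _) (by linarith))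
        have h2 : v z ≤ v (c - z) :=
          hv_mono _ _ (le_of_pow_le_pow_left₀ two_ne_zero (norm_nonneg _) (by linarith))
        linarith [aux_rearrange (u (b - z)) (u (a - z)) (v (c - z)) (v z) h1 h2]
    have hIntc : ∀ x : EuclideanSpace ℝ (Fin n),
        Integrable (fun z => u (x - (c - z)) * v (c - z)) :=
      fun x => (hInt x).comp_sub_left c
    have hrefl : ∀ x : EuclideanSpace ℝ (Fin n),
        (∫ z, u (x - (c - z)) * v (c - z)) = ∫ z, u (x - z) * v z :=
      fun x => integral_sub_left_eq_self (fun z => u (x - z) * v z) volume c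
    have h2b : (2:ℝ) * ∫ z, u (b - z) * v z
        = ∫ z, (u (b - z) * v z + u (b - (c - z)) * v (c - z)) := by
      rw [integral_add (hInt b) (hIntc b), hrefl b]; ring
    have h2a : (2:ℝ) * ∫ z, u (a - z) * v z
        = ∫ z, (u (a - z) * v z + u (a - (c - z)) * v (c - z)) := by
      rw [integral_add (hInt a) (hIntc a), hrefl a]; ring
    have hmono := integral_mono ((hInt b).add (hIntc b)) ((hInt a).add (hIntc a)) pointwise
    simp only [Pi.add_apply] at hmono
    linarith
  refine ⟨?_, part2, ?_⟩
  · intro x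
    rw [integral_pos_iff_support_of_nonneg
      (fun z => le_of_lt (mul_pos (hu_pos _) (hv_pos _))) (hInt x)]
    have hsupp : Function.support (fun z => u (x - z) * v z) = Set.univ :=
      Set.eq_univ_of_forall (fun z => (mul_pos (hu_pos _) (hv_pos _)).ne')
    rw [hsupp]
    exact isOpen_univ.measure_pos volume Set.univ_nonempty
  · intro x y hxy
    have hx : ‖x‖ = ‖‖x‖ • e‖ := by
      rw [norm_smul, he1, Real.norm_eq_abs, abs_of_nonneg (norm_nonneg x), mul_one]
    have hy : ‖y‖ = ‖‖y‖ • e‖ := by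
      rw [norm_smul, he1, Real.norm_eq_abs, abs_of_nonneg (norm_nonneg y), mul_one]
    rw [part2 x (‖x‖ • e) hx, part2 y (‖y‖ • e) hy]
    exact core ‖x‖ ‖y‖ (norm_nonneg x) hxy
end

section
/- Let n ≥ 1, α ∈ (0,1), a₀ > 0, r₀ ≥ 1, and define v₀(x) = a₀|x|^{-n-2α} for |x| ≥ r₀ and v₀(x) = a₀ r₀^{-n-2α} for |x| ≤ r₀. Let q(t,x) = t^{-n/(2α)} (1 + |t^{-1/(2α)}x|^{n+2α})^{-1}. Then there is a constant C > 0 depending only on n and α such that for all t > 0 and all x ∈ ℝⁿ, (q(t,·) ∗ v₀)(x) ≤ C (1 + r₀^{-2α} t) a₀ |x|^{-n-2α}. -/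
open MeasureTheory Real

lemma aux_pow_bound {u β : ℝ} (hu : 0 ≤ u) (hβ : 0 ≤ β) :
    (1 + u) ^ β ≤ 2 ^ β * (1 + u ^ β) := by
  have hm : (0:ℝ) ≤ max 1 u := le_max_of_le_left zero_le_one
  have h1 : (1 + u) ≤ 2 * max 1 u := by
    rcases le_total u 1 with h | h
    · simp [max_eq_left h]; linarith
    · simp [max_eq_right h]; linarith
  have h2 : (max 1 u) ^ β ≤ 1 + u ^ β := by
    rcases le_total u 1 with h | h
    · rw [max_eq_left h, one_rpow]; nlinarith [rpow_nonneg hu β]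
    · rw [max_eq_right h]; nlinarith [rpow_nonneg hu β]
  calc (1 + u) ^ β ≤ (2 * max 1 u) ^ β := by
        apply rpow_le_rpow (by positivity) h1 hβ
    _ = 2 ^ β * (max 1 u) ^ β := mul_rpow (by norm_num) hm
    _ ≤ 2 ^ β * (1 + u ^ β) := by
        have : (0:ℝ) ≤ (2:ℝ)^β := by positivity
        nlinarith

lemma aux_inv_bound {u β : ℝ} (hu : 0 ≤ u) (hβ : 0 ≤ β) :
    (1 + u ^ β)⁻¹ ≤ 2 ^ β * (1 + u) ^ (-β) := by
  have h1 : (0:ℝ) < 1 + u ^ β := by positivity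
  have h2 : (0:ℝ) < (1 + u) ^ β := by positivity
  rw [rpow_neg (by positivity)]
  rw [inv_le_iff_one_le_mul₀ h1]
  have key := aux_pow_bound hu hβ
  rw [show (2:ℝ) ^ β * ((1 + u) ^ β)⁻¹ * (1 + u ^ β)
      = ((1 + u ^ β) * 2 ^ β) / ((1 + u) ^ β) from by ring, le_div_iff₀ h2, one_mul]
  linarith

lemma integrable_g (n : ℕ) (β : ℝ) (hβ : (n:ℝ) < β) :
    Integrable (fun w : EuclideanSpace ℝ (Fin n) => (1 + ‖w‖ ^ β)⁻¹) := by
  have h := integrable_one_add_norm (E := EuclideanSpace ℝ (Fin n)) (μ := volume) (r := β)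
    (by simpa using hβ)
  refine (h.const_mul ((2:ℝ) ^ β)).mono' ?_ (Filter.Eventually.of_forall fun w => ?_)
  · apply Measurable.aestronglyMeasurable; fun_prop
  · rw [Real.norm_eq_abs, abs_of_pos (by positivity)]
    exact aux_inv_bound (norm_nonneg w) (le_trans (Nat.cast_nonneg n) hβ.le)

set_option maxHeartbeats 1000000 in
theorem statement_6 (n : ℕ) (hn : 1 ≤ n) (α a₀ r₀ : ℝ) (hα : 0 < α) (hα1 : α < 1)
    (ha₀ : 0 < a₀) (hr₀ : 1 ≤ r₀) :
    ∃ C > 0, ∀ t : ℝ, 0 < t → ∀ x : EuclideanSpace ℝ (Fin n), x ≠ 0 →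
      (∫ y, (t ^ (-(n : ℝ) / (2 * α)) *
          (1 + (t ^ (-(1 / (2 * α))) * ‖x - y‖) ^ ((n : ℝ) + 2 * α))⁻¹) *
        (if r₀ ≤ ‖y‖ then a₀ * ‖y‖ ^ (-((n : ℝ) + 2 * α))
          else a₀ * r₀ ^ (-((n : ℝ) + 2 * α)))) ≤
      C * (1 + r₀ ^ (-(2 * α)) * t) * a₀ * ‖x‖ ^ (-((n : ℝ) + 2 * α)) := by
  set E := EuclideanSpace ℝ (Fin n)
  set β : ℝ := (n : ℝ) + 2 * α with hβdef
  have hn1 : (1:ℝ) ≤ (n:ℝ) := by exact_mod_cast hn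
  have hβpos : 0 < β := by positivity
  have hnβ : (n:ℝ) < β := by simp only [hβdef]; linarith
  have hr₀pos : (0:ℝ) < r₀ := lt_of_lt_of_le one_pos hr₀
  set g : E → ℝ := fun w => (1 + ‖w‖ ^ β)⁻¹ with hgdef
  have hg_int : Integrable g := integrable_g n β hnβ
  set Ig : ℝ := ∫ w, g w with hIgdef
  have hIg0 : 0 ≤ Ig := integral_nonneg fun w => by positivity
  refine ⟨2 ^ (β + 1) * (Ig + 1), by positivity, fun t ht x hx => ?_⟩
  have hR : 0 < ‖x‖ := norm_pos_iff.mpr hx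
  set R : ℝ := ‖x‖ with hRdef
  set v : E → ℝ := fun y => if r₀ ≤ ‖y‖ then a₀ * ‖y‖ ^ (-β) else a₀ * r₀ ^ (-β) with hvdef
  set k : E → ℝ := fun y =>
      t ^ (-(n:ℝ) / (2 * α)) * (1 + (t ^ (-(1 / (2 * α))) * ‖x - y‖) ^ β)⁻¹ with hkdef
  have hv_nonneg : ∀ y, 0 ≤ v y := fun y => by
    simp only [hvdef]; split <;> positivity
  have hk_nonneg : ∀ y, 0 ≤ k y := fun y => by
    simp only [hkdef]; positivity
  have hv_meas : Measurable v := by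
    apply Measurable.ite (measurableSet_le measurable_const measurable_norm) <;> fun_prop
  have hk_meas : Measurable k := by fun_prop
  -- bound on v by scaled g
  have hv_le : ∀ y : E, v y ≤ (2 * a₀ * r₀ ^ (-β)) * g (r₀⁻¹ • y) := by
    intro y
    have hnorm : ‖r₀⁻¹ • y‖ = r₀⁻¹ * ‖y‖ := by
      rw [norm_smul, Real.norm_eq_abs, abs_of_pos (by positivity)]
    have hr₀β : (0:ℝ) < r₀ ^ (-β) := rpow_pos_of_pos hr₀pos _
    simp only [hvdef, hgdef, hnorm]
    have hrw : (r₀⁻¹ * ‖y‖) ^ β = r₀ ^ (-β) * ‖y‖ ^ β := by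
      rw [mul_rpow (by positivity) (norm_nonneg y), ← rpow_neg_one r₀, ← rpow_mul hr₀pos.le]
      ring_nf
    rw [hrw]
    split_ifs with h
    · have hy : 0 < ‖y‖ := lt_of_lt_of_le hr₀pos h
      have h1 : ‖y‖ ^ (-β) ≤ r₀ ^ (-β) := rpow_le_rpow_of_nonpos hr₀pos h (by linarith)
      have h2 : ‖y‖ ^ (-β) * ‖y‖ ^ β = 1 := by
        rw [← rpow_add hy]; simp
      have h3 : 0 < 1 + r₀ ^ (-β) * ‖y‖ ^ β := by positivity
      rw [show (2 * a₀ * r₀ ^ (-β)) * (1 + r₀ ^ (-β) * ‖y‖ ^ β)⁻¹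
          = (2 * a₀ * r₀ ^ (-β)) / (1 + r₀ ^ (-β) * ‖y‖ ^ β) from (div_eq_mul_inv _ _).symm,
        le_div_iff₀ h3]
      have hyβ : 0 < ‖y‖ ^ β := rpow_pos_of_pos hy _
      calc a₀ * ‖y‖ ^ (-β) * (1 + r₀ ^ (-β) * ‖y‖ ^ β)
          = a₀ * ‖y‖ ^ (-β) + a₀ * r₀ ^ (-β) * (‖y‖ ^ (-β) * ‖y‖ ^ β) := by ring
        _ ≤ a₀ * r₀ ^ (-β) + a₀ * r₀ ^ (-β) * 1 := by
            rw [h2]; gcongr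
        _ = 2 * a₀ * r₀ ^ (-β) := by ring
    · push_neg at h
      have hu1 : r₀ ^ (-β) * ‖y‖ ^ β ≤ 1 := by
        rcases eq_or_lt_of_le (norm_nonneg y) with h0 | h0
        · rw [← h0, zero_rpow hβpos.ne']; simp
        · calc r₀ ^ (-β) * ‖y‖ ^ β ≤ r₀ ^ (-β) * r₀ ^ β :=
                mul_le_mul_of_nonneg_left
                  (rpow_le_rpow (norm_nonneg y) h.le hβpos.le) hr₀β.le
            _ = 1 := by rw [← rpow_add hr₀pos]; simp
      have h3 : 0 < 1 + r₀ ^ (-β) * ‖y‖ ^ β := by positivity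
      rw [show (2 * a₀ * r₀ ^ (-β)) * (1 + r₀ ^ (-β) * ‖y‖ ^ β)⁻¹
          = (2 * a₀ * r₀ ^ (-β)) / (1 + r₀ ^ (-β) * ‖y‖ ^ β) from (div_eq_mul_inv _ _).symm,
        le_div_iff₀ h3]
      nlinarith [mul_pos ha₀ hr₀β, hu1]
  have hgr_int : Integrable (fun y : E => g (r₀⁻¹ • y)) :=
    hg_int.comp_smul (inv_ne_zero hr₀pos.ne')
  have hv_int : Integrable v := by
    refine (hgr_int.const_mul (2 * a₀ * r₀ ^ (-β))).mono' hv_meas.aestronglyMeasurable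
      (Filter.Eventually.of_forall fun y => ?_)
    rw [Real.norm_eq_abs, abs_of_nonneg (hv_nonneg y)]
    exact hv_le y
  have hfinrank : Module.finrank ℝ E = n := finrank_euclideanSpace_fin
  -- integral of v
  have hv_integral : ∫ y, v y ≤ 2 * a₀ * r₀ ^ (-(2*α)) * Ig := by
    calc ∫ y, v y ≤ ∫ y, (2 * a₀ * r₀ ^ (-β)) * g (r₀⁻¹ • y) :=
          integral_mono hv_int (hgr_int.const_mul _) hv_le
      _ = (2 * a₀ * r₀ ^ (-β)) * ∫ y, g (r₀⁻¹ • y) := integral_const_mul _ _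
      _ = (2 * a₀ * r₀ ^ (-β)) * (r₀ ^ (n:ℕ) * Ig) := by
          rw [Measure.integral_comp_inv_smul volume g r₀, hfinrank, abs_of_pos (by positivity),
            smul_eq_mul]
      _ = 2 * a₀ * r₀ ^ (-(2*α)) * Ig := by
          rw [← rpow_natCast r₀ n,
            show (2 * a₀ * r₀ ^ (-β)) * (r₀ ^ ((n:ℝ)) * Ig)
              = 2 * a₀ * (r₀ ^ (-β) * r₀ ^ ((n:ℝ))) * Ig from by ring,
            ← rpow_add hr₀pos, show -β + (n:ℝ) = -(2*α) from by rw [hβdef]; ring]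
  -- integral of k
  have hs : (0:ℝ) < t ^ (-(1 / (2 * α))) := rpow_pos_of_pos ht _
  have hsnorm : ∀ z : E, t ^ (-(1 / (2 * α))) * ‖z‖ = ‖t ^ (-(1 / (2 * α))) • z‖ := fun z => by
    rw [norm_smul, Real.norm_eq_abs, abs_of_pos hs]
  have hk_eq : ∀ y, k y = t ^ (-(n:ℝ) / (2 * α)) * g (t ^ (-(1 / (2 * α))) • (x - y)) := by
    intro y; simp only [hkdef, hgdef, ← hsnorm]
  have hG_int : Integrable (fun z : E => g (t ^ (-(1 / (2 * α))) • z)) :=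
    hg_int.comp_smul hs.ne'
  have htrans : ∀ f : E → ℝ, Integrable f → ∫ y : E, f (x - y) = ∫ y, f y := by
    intro f _
    calc ∫ y : E, f (x - y) = ∫ y : E, f (x + y) := by
          rw [← integral_neg_eq_self (fun y : E => f (x + y)) volume]
          simp [sub_eq_add_neg]
      _ = ∫ y, f y := integral_add_left_eq_self f x
  have hk_int : Integrable k := by
    have h2 : Integrable (fun y : E => g (t ^ (-(1 / (2 * α))) • (x - y))) :=
      hG_int.comp_sub_left x
    exact (h2.const_mul (t ^ (-(n:ℝ) / (2 * α)))).congr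
      (Filter.Eventually.of_forall fun y => ((hk_eq y).symm :))
  have hscale : t ^ (-(n:ℝ) / (2 * α)) * ((t ^ (-(1 / (2 * α)))) ^ (n:ℕ))⁻¹ = 1 := by
    rw [← rpow_natCast (t ^ (-(1 / (2 * α)))) n, ← rpow_mul ht.le,
      ← rpow_neg ht.le, ← rpow_add ht,
      show -(n:ℝ) / (2 * α) + -(-(1 / (2 * α)) * (n:ℝ)) = 0 from by field_simp; ring, rpow_zero]
  have hk_integral : ∫ y, k y = Ig := by
    simp only [hk_eq]
    rw [integral_const_mul]
    have h1 : ∫ y : E, g (t ^ (-(1 / (2 * α))) • (x - y))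
        = ∫ z : E, g (t ^ (-(1 / (2 * α))) • z) := htrans _ hG_int
    rw [h1, Measure.integral_comp_smul_of_nonneg volume g _ (hR := hs.le), hfinrank, smul_eq_mul,
      ← mul_assoc, hscale, one_mul]
  -- endgame
  have hc : (0:ℝ) < t ^ (-(n:ℝ) / (2 * α)) := rpow_pos_of_pos ht _
  have hF_int : Integrable (fun y => k y * v y) := by
    refine (hv_int.const_mul (t ^ (-(n:ℝ) / (2 * α)))).mono'
      (hk_meas.mul hv_meas).aestronglyMeasurable (Filter.Eventually.of_forall fun y => ?_)
    rw [Real.norm_eq_abs, abs_of_nonneg (mul_nonneg (hk_nonneg y) (hv_nonneg y))]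
    have hk_le : k y ≤ t ^ (-(n:ℝ) / (2 * α)) := by
      simp only [hkdef]
      have h1 : (1 + (t ^ (-(1 / (2 * α))) * ‖x - y‖) ^ β)⁻¹ ≤ 1 := by
        rw [inv_le_one₀ (by positivity)]
        nlinarith [rpow_nonneg (mul_nonneg hs.le (norm_nonneg (x - y))) β]
      exact mul_le_of_le_one_right hc.le h1
    exact mul_le_mul_of_nonneg_right hk_le (hv_nonneg y)
  set B : Set E := Metric.closedBall (0:E) (R/2) with hBdef
  have hBmeas : MeasurableSet B := measurableSet_closedBall
  have hsplit : ∫ y, k y * v y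
      = (∫ y in B, k y * v y) + ∫ y in Bᶜ, k y * v y :=
    (integral_add_compl hBmeas hF_int).symm
  -- bound of the kernel on B
  have hRhalf : (0:ℝ) < R / 2 := by positivity
  have hP : (0:ℝ) < 2 ^ β := by positivity
  have hRR : (0:ℝ) < R ^ (-β) := rpow_pos_of_pos hR _
  have hr2 : (0:ℝ) < r₀ ^ (-(2*α)) := rpow_pos_of_pos hr₀pos _
  have hhalfeq : (R/2) ^ (-β) = 2 ^ β * R ^ (-β) := by
    rw [div_rpow hR.le (by norm_num : (0:ℝ) ≤ 2), div_eq_mul_inv,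
      ← rpow_neg (by norm_num : (0:ℝ) ≤ 2), neg_neg, mul_comm]
  have heq : t ^ (-(n:ℝ) / (2 * α)) * ((t ^ (-(1 / (2 * α))) * (R/2)) ^ β)⁻¹
      = 2 ^ β * t * R ^ (-β) := by
    have e1 : (t ^ (-(1 / (2 * α))) * (R/2)) ^ β
        = t ^ (-(1 / (2 * α)) * β) * (R/2) ^ β := by
      rw [mul_rpow hs.le hRhalf.le, ← rpow_mul ht.le]
    rw [e1, mul_inv, ← rpow_neg ht.le, ← mul_assoc, ← rpow_add ht,
      show -(n:ℝ) / (2 * α) + -(-(1 / (2 * α)) * β) = 1 from by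
        rw [hβdef]; field_simp; ring, rpow_one,
      ← rpow_neg hRhalf.le, hhalfeq]
    ring
  have hkB : ∀ y ∈ B, k y ≤ 2 ^ β * t * R ^ (-β) := by
    intro y hy
    have hy' : ‖y‖ ≤ R / 2 := by
      simpa [hBdef, Metric.mem_closedBall, dist_zero_right] using hy
    have hxy : R / 2 ≤ ‖x - y‖ := by
      have h := norm_sub_norm_le x y
      simp only [hRdef] at *
      linarith
    have hxypos : (0:ℝ) < ‖x - y‖ := lt_of_lt_of_le hRhalf hxy
    have hb1 : (0:ℝ) < (t ^ (-(1 / (2 * α))) * (R/2)) ^ β := by positivity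
    have hb2 : (0:ℝ) < (t ^ (-(1 / (2 * α))) * ‖x - y‖) ^ β := by positivity
    have step1 : (1 + (t ^ (-(1 / (2 * α))) * ‖x - y‖) ^ β)⁻¹
        ≤ ((t ^ (-(1 / (2 * α))) * ‖x - y‖) ^ β)⁻¹ := by
      apply inv_anti₀ hb2; linarith
    have step2 : ((t ^ (-(1 / (2 * α))) * ‖x - y‖) ^ β)⁻¹
        ≤ ((t ^ (-(1 / (2 * α))) * (R/2)) ^ β)⁻¹ := by
      apply inv_anti₀ hb1
      apply rpow_le_rpow (by positivity) _ hβpos.le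
      exact mul_le_mul_of_nonneg_left hxy hs.le
    calc k y ≤ t ^ (-(n:ℝ) / (2 * α)) * ((t ^ (-(1 / (2 * α))) * (R/2)) ^ β)⁻¹ := by
          simp only [hkdef]
          exact mul_le_mul_of_nonneg_left (le_trans step1 step2) hc.le
      _ = 2 ^ β * t * R ^ (-β) := heq
  have hA : ∫ y in B, k y * v y
      ≤ 2 ^ β * t * R ^ (-β) * (2 * a₀ * r₀ ^ (-(2*α)) * Ig) := by
    calc ∫ y in B, k y * v y ≤ ∫ y in B, (2 ^ β * t * R ^ (-β)) * v y := by
          apply setIntegral_mono_on hF_int.integrableOn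
            ((hv_int.const_mul _).integrableOn) hBmeas
          exact fun y hy => mul_le_mul_of_nonneg_right (hkB y hy) (hv_nonneg y)
      _ = (2 ^ β * t * R ^ (-β)) * ∫ y in B, v y := integral_const_mul _ _
      _ ≤ (2 ^ β * t * R ^ (-β)) * ∫ y, v y := by
          apply mul_le_mul_of_nonneg_left _ (by positivity)
          exact setIntegral_le_integral hv_int (Filter.Eventually.of_forall hv_nonneg)
      _ ≤ 2 ^ β * t * R ^ (-β) * (2 * a₀ * r₀ ^ (-(2*α)) * Ig) :=
          mul_le_mul_of_nonneg_left hv_integral (by positivity)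
  have hvBc : ∀ y ∈ Bᶜ, v y ≤ 2 ^ β * a₀ * R ^ (-β) := by
    intro y hy
    have hy' : R / 2 < ‖y‖ := by
      simpa [hBdef, Metric.mem_closedBall, dist_zero_right, not_le] using hy
    have key : v y ≤ a₀ * (R/2) ^ (-β) := by
      simp only [hvdef]
      split_ifs with h
      · exact mul_le_mul_of_nonneg_left
          (rpow_le_rpow_of_nonpos hRhalf hy'.le (by linarith)) ha₀.le
      · push_neg at h
        exact mul_le_mul_of_nonneg_left
          (rpow_le_rpow_of_nonpos hRhalf (by linarith) (by linarith)) ha₀.le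
    calc v y ≤ a₀ * (R/2) ^ (-β) := key
      _ = 2 ^ β * a₀ * R ^ (-β) := by rw [hhalfeq]; ring
  have hB' : ∫ y in Bᶜ, k y * v y ≤ 2 ^ β * a₀ * R ^ (-β) * Ig := by
    calc ∫ y in Bᶜ, k y * v y ≤ ∫ y in Bᶜ, k y * (2 ^ β * a₀ * R ^ (-β)) := by
          apply setIntegral_mono_on hF_int.integrableOn
            ((hk_int.mul_const _).integrableOn) hBmeas.compl
          exact fun y hy => mul_le_mul_of_nonneg_left (hvBc y hy) (hk_nonneg y)
      _ = (∫ y in Bᶜ, k y) * (2 ^ β * a₀ * R ^ (-β)) := integral_mul_const _ _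
      _ ≤ Ig * (2 ^ β * a₀ * R ^ (-β)) := by
          apply mul_le_mul_of_nonneg_right _ (by positivity)
          rw [← hk_integral]
          exact setIntegral_le_integral hk_int (Filter.Eventually.of_forall hk_nonneg)
      _ = 2 ^ β * a₀ * R ^ (-β) * Ig := by ring
  have expand : 2 ^ (β+1) * (Ig + 1) * (1 + r₀ ^ (-(2 * α)) * t) * a₀ * R ^ (-β)
      = 2 * (2 ^ β) * (Ig + 1) * a₀ * R ^ (-β)
        + 2 * (2 ^ β) * (Ig + 1) * a₀ * R ^ (-β) * (r₀ ^ (-(2*α)) * t) := by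
    rw [rpow_add (by norm_num : (0:ℝ) < 2), rpow_one]; ring
  have hA2 : 2 ^ β * t * R ^ (-β) * (2 * a₀ * r₀ ^ (-(2*α)) * Ig)
      ≤ 2 * (2 ^ β) * (Ig + 1) * a₀ * R ^ (-β) * (r₀ ^ (-(2*α)) * t) := by
    rw [show 2 ^ β * t * R ^ (-β) * (2 * a₀ * r₀ ^ (-(2*α)) * Ig)
        = 2 * (2 ^ β) * Ig * a₀ * R ^ (-β) * (r₀ ^ (-(2*α)) * t) from by ring]
    gcongr
    linarith
  have hB2 : 2 ^ β * a₀ * R ^ (-β) * Ig ≤ 2 * (2 ^ β) * (Ig + 1) * a₀ * R ^ (-β) := by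
    rw [show 2 * (2 ^ β) * (Ig + 1) * a₀ * R ^ (-β)
        = 2 ^ β * a₀ * R ^ (-β) * (2 * (Ig + 1)) from by ring]
    gcongr
    linarith
  calc (∫ y, k y * v y) = (∫ y in B, k y * v y) + ∫ y in Bᶜ, k y * v y := hsplit
    _ ≤ 2 ^ β * t * R ^ (-β) * (2 * a₀ * r₀ ^ (-(2*α)) * Ig)
        + 2 ^ β * a₀ * R ^ (-β) * Ig := add_le_add hA hB'
    _ ≤ 2 ^ (β+1) * (Ig + 1) * (1 + r₀ ^ (-(2 * α)) * t) * a₀ * R ^ (-β) := by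
        rw [expand]; linarith
end

section
/- Let n ≥ 1, α ∈ (0,1), a₀ > 0, r₀ ≥ 1, and define v₀(x) = a₀|x|^{-n-2α} for |x| ≥ r₀ and v₀(x) = a₀ r₀^{-n-2α} for |x| ≤ r₀. Let q(t,x) = t/(t^{n/(2α)+1} + |x|^{n+2α}). Then there is a constant c > 0 depending only on n and α such that for all t > 0 and all |x| ≥ r₀, (q(t,·) ∗ v₀)(x) ≥ c · t/(t^{n/(2α)+1} + 1) · a₀ |x|^{-n-2α}. -/
open MeasureTheory Metric

theorem statement_7 (n : ℕ) (hn : 1 ≤ n) (α a₀ r₀ : ℝ) (hα : 0 < α) (hα1 : α < 1)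
    (ha₀ : 0 < a₀) (hr₀ : 1 ≤ r₀) :
    ∃ c > 0, ∀ t : ℝ, 0 < t → ∀ x : EuclideanSpace ℝ (Fin n), r₀ ≤ ‖x‖ →
      c * (t / (t ^ ((n : ℝ) / (2 * α) + 1) + 1)) * a₀ * ‖x‖ ^ (-((n : ℝ) + 2 * α)) ≤
        ∫ y, (t / (t ^ ((n : ℝ) / (2 * α) + 1) + ‖x - y‖ ^ ((n : ℝ) + 2 * α))) *
          (if r₀ ≤ ‖y‖ then a₀ * ‖y‖ ^ (-((n : ℝ) + 2 * α))
            else a₀ * r₀ ^ (-((n : ℝ) + 2 * α))) := by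
  set E := EuclideanSpace ℝ (Fin n)
  set s : ℝ := (n : ℝ) + 2 * α with hs_def
  set β : ℝ := (n : ℝ) / (2 * α) + 1 with hβ_def
  have hs_pos : 0 < s := by positivity
  have hn1 : (1:ℝ) ≤ n := by exact_mod_cast hn
  have hns : (n : ℝ) < s := by
    have : (0:ℝ) < 2 * α := by positivity
    simp only [hs_def]; linarith
  have hvol_pos : 0 < (volume (ball (0 : E) 1)).toReal :=
    ENNReal.toReal_pos (measure_ball_pos volume _ one_pos).ne' measure_ball_lt_top.ne
  refine ⟨(volume (ball (0 : E) 1)).toReal * 2 ^ (-s), by positivity, ?_⟩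
  intro t ht x hx
  have hx1 : (1:ℝ) ≤ ‖x‖ := le_trans hr₀ hx
  have hx0 : (0:ℝ) < ‖x‖ := lt_of_lt_of_le one_pos hx1
  have hr₀0 : (0:ℝ) < r₀ := lt_of_lt_of_le one_pos hr₀
  have htβ : 0 < t ^ β := Real.rpow_pos_of_pos ht β
  set f : E → ℝ := fun y =>
    (t / (t ^ β + ‖x - y‖ ^ s)) *
      (if r₀ ≤ ‖y‖ then a₀ * ‖y‖ ^ (-s) else a₀ * r₀ ^ (-s)) with hf_def
  have hf_nonneg : ∀ y, 0 ≤ f y := by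
    intro y
    apply mul_nonneg
    · apply div_nonneg ht.le; positivity
    · split <;> positivity
  -- measurability
  have hq_cont : Continuous fun y : E => t / (t ^ β + ‖x - y‖ ^ s) := by
    apply continuous_const.div
    · exact continuous_const.add
        (((continuous_const.sub continuous_id).norm).rpow_const fun y => Or.inr hs_pos.le)
    · intro y; positivity
  have hv_meas : Measurable fun y : E =>
      (if r₀ ≤ ‖y‖ then a₀ * ‖y‖ ^ (-s) else a₀ * r₀ ^ (-s)) := by
    apply Measurable.ite (measurableSet_le measurable_const measurable_norm)
    · fun_prop
    · exact measurable_const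
  have hmeas : AEStronglyMeasurable f volume :=
    (hq_cont.measurable.mul hv_meas).aestronglyMeasurable
  -- integrability
  have hInt : Integrable f := by
    have hg : Integrable (fun y : E =>
        (t ^ (-((n:ℝ) / (2 * α))) * (a₀ * 2 ^ s)) * (1 + ‖y‖) ^ (-s)) := by
      apply Integrable.const_mul
      exact integrable_one_add_norm (by rw [finrank_euclideanSpace_fin]; exact hns)
    refine hg.mono' hmeas (Filter.Eventually.of_forall fun y => ?_)
    rw [Real.norm_of_nonneg (hf_nonneg y)]
    have h1y : (0:ℝ) < 1 + ‖y‖ := by positivity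
    have hq : t / (t ^ β + ‖x - y‖ ^ s) ≤ t ^ (-((n:ℝ) / (2 * α))) := by
      have : t / (t ^ β + ‖x - y‖ ^ s) ≤ t / t ^ β := by
        apply div_le_div_of_nonneg_left ht.le htβ
        have : (0:ℝ) ≤ ‖x - y‖ ^ s := by positivity
        linarith
      refine this.trans_eq ?_
      rw [div_eq_iff htβ.ne', ← Real.rpow_add ht]
      rw [show -((n:ℝ) / (2 * α)) + β = 1 by rw [hβ_def]; ring]
      exact (Real.rpow_one t).symm
    have hv : (if r₀ ≤ ‖y‖ then a₀ * ‖y‖ ^ (-s) else a₀ * r₀ ^ (-s))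
        ≤ a₀ * 2 ^ s * (1 + ‖y‖) ^ (-s) := by
      have key : ∀ b : ℝ, 0 < b → 1 + ‖y‖ ≤ 2 * b →
          b ^ (-s) ≤ 2 ^ s * (1 + ‖y‖) ^ (-s) := by
        intro b hb hle
        rw [Real.rpow_neg hb.le, Real.rpow_neg h1y.le,
          ← Real.inv_rpow hb.le, ← Real.inv_rpow h1y.le,
          ← Real.mul_rpow (by norm_num) (by positivity)]
        apply Real.rpow_le_rpow (by positivity) _ hs_pos.le
        have h2 : (1 + ‖y‖) / b ≤ 2 := (div_le_iff₀ hb).mpr (by linarith)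
        calc b⁻¹ = (1 + ‖y‖)⁻¹ * ((1 + ‖y‖) / b) := by field_simp
          _ ≤ (1 + ‖y‖)⁻¹ * 2 := mul_le_mul_of_nonneg_left h2 (by positivity)
          _ = 2 * (1 + ‖y‖)⁻¹ := mul_comm _ _
      split
      · rename_i h
        have hy0 : (0:ℝ) < ‖y‖ := lt_of_lt_of_le hr₀0 h
        have := key ‖y‖ hy0 (by nlinarith [le_trans hr₀ h])
        calc a₀ * ‖y‖ ^ (-s) ≤ a₀ * (2 ^ s * (1 + ‖y‖) ^ (-s)) :=
              mul_le_mul_of_nonneg_left this ha₀.le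
          _ = a₀ * 2 ^ s * (1 + ‖y‖) ^ (-s) := by ring
      · rename_i h
        push_neg at h
        have := key r₀ hr₀0 (by nlinarith [norm_nonneg y])
        calc a₀ * r₀ ^ (-s) ≤ a₀ * (2 ^ s * (1 + ‖y‖) ^ (-s)) :=
              mul_le_mul_of_nonneg_left this ha₀.le
          _ = a₀ * 2 ^ s * (1 + ‖y‖) ^ (-s) := by ring
    calc f y ≤ t ^ (-((n:ℝ) / (2 * α))) * (a₀ * 2 ^ s * (1 + ‖y‖) ^ (-s)) := by
          apply mul_le_mul hq hv _ (by positivity)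
          split <;> positivity
      _ = (t ^ (-((n:ℝ) / (2 * α))) * (a₀ * 2 ^ s)) * (1 + ‖y‖) ^ (-s) := by ring
  -- pointwise lower bound on the unit ball around x
  set C : ℝ := t / (t ^ β + 1) * (a₀ * (2 * ‖x‖) ^ (-s)) with hC_def
  have hlow : ∀ y ∈ ball x 1, C ≤ f y := by
    intro y hy
    rw [mem_ball, dist_comm, dist_eq_norm] at hy
    have hq : t / (t ^ β + 1) ≤ t / (t ^ β + ‖x - y‖ ^ s) := by
      apply div_le_div_of_nonneg_left ht.le (by positivity)
      have : ‖x - y‖ ^ s ≤ 1 :=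
        Real.rpow_le_one (norm_nonneg _) hy.le hs_pos.le
      linarith
    have hv : a₀ * (2 * ‖x‖) ^ (-s)
        ≤ (if r₀ ≤ ‖y‖ then a₀ * ‖y‖ ^ (-s) else a₀ * r₀ ^ (-s)) := by
      split
      · rename_i h
        have hy0 : (0:ℝ) < ‖y‖ := lt_of_lt_of_le hr₀0 h
        have hyx : ‖y‖ ≤ 2 * ‖x‖ := by
          have h' : ‖y‖ - ‖x‖ ≤ ‖x - y‖ := by
            rw [norm_sub_rev]; exact norm_sub_norm_le y x
          linarith
        exact mul_le_mul_of_nonneg_left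
          (Real.rpow_le_rpow_of_nonpos hy0 hyx (neg_nonpos.mpr hs_pos.le)) ha₀.le
      · exact mul_le_mul_of_nonneg_left
          (Real.rpow_le_rpow_of_nonpos hr₀0 (by linarith) (neg_nonpos.mpr hs_pos.le)) ha₀.le
    apply mul_le_mul hq hv (by positivity) (div_nonneg ht.le (by positivity))
  have step1 : (volume (ball x 1)).toReal * C ≤ ∫ y in ball x 1, f y := by
    have := setIntegral_mono_on (integrableOn_const measure_ball_lt_top.ne)
      hInt.integrableOn measurableSet_ball hlow
    rwa [setIntegral_const, smul_eq_mul] at this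
  have step2 : (∫ y in ball x 1, f y) ≤ ∫ y, f y :=
    setIntegral_le_integral hInt (Filter.Eventually.of_forall hf_nonneg)
  refine le_trans (le_of_eq ?_) (step1.trans step2)
  rw [Measure.addHaar_ball_center volume x 1, hC_def,
    Real.mul_rpow (by norm_num) hx0.le]
  ring
end

section
/- Let n ≥ 1, α ∈ (0,1), and γ ∈ (0,2α). Let w_γ(x) = |x|^γ and q(t,x) = t^{-n/(2α)}(1 + |t^{-1/(2α)}x|^{n+2α})^{-1}. Then there exist constants 0 < c_γ ≤ C_γ depending only on n, α, γ such that for all t > 0 and x ∈ ℝⁿ: (i) (q(t,·) ∗ w_γ)(x) ≤ C_γ (|x|^γ + t^{γ/(2α)}); and (ii) if in addition |x| ≥ t^{1/(2α)}, then (q(t,·) ∗ w_γ)(x) ≥ c_γ |x|^γ. -/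
open MeasureTheory Metric

-- helper: (a+b)^γ ≤ 2^γ (a^γ + b^γ)
lemma stmt8_add_rpow_le {a b γ : ℝ} (ha : 0 ≤ a) (hb : 0 ≤ b) (hγ : 0 < γ) :
    (a + b) ^ γ ≤ 2 ^ γ * (a ^ γ + b ^ γ) := by
  have h1 : a + b ≤ 2 * max a b := by
    rcases le_total a b with h | h
    · rw [max_eq_right h]; linarith
    · rw [max_eq_left h]; linarith
  have h2 : (a + b) ^ γ ≤ (2 * max a b) ^ γ :=
    Real.rpow_le_rpow (by linarith) h1 hγ.le
  have h3 : (2 * max a b) ^ γ = 2 ^ γ * (max a b) ^ γ :=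
    Real.mul_rpow (by norm_num) (le_max_of_le_left ha)
  have h4 : (max a b) ^ γ ≤ a ^ γ + b ^ γ := by
    rcases le_total a b with h | h
    · rw [max_eq_right h]
      nlinarith [Real.rpow_nonneg ha γ]
    · rw [max_eq_left h]
      nlinarith [Real.rpow_nonneg hb γ]
  have h5 : (0:ℝ) < 2 ^ γ := Real.rpow_pos_of_pos (by norm_num) γ
  calc (a + b) ^ γ ≤ 2 ^ γ * (max a b) ^ γ := by rw [← h3]; exact h2
    _ ≤ 2 ^ γ * (a ^ γ + b ^ γ) := by nlinarith

-- integrability of z ↦ (1+‖z‖^p)⁻¹ ‖z‖^β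
lemma stmt8_integrable (n : ℕ) {p β : ℝ} (hβ : 0 ≤ β) (hp : (n : ℝ) + β < p) :
    Integrable (fun z : EuclideanSpace ℝ (Fin n) => (1 + ‖z‖ ^ p)⁻¹ * ‖z‖ ^ β) := by
  have hn0 : (0:ℝ) ≤ (n:ℝ) := Nat.cast_nonneg n
  have hp0 : 0 < p := by linarith
  have hcont : Continuous fun z : EuclideanSpace ℝ (Fin n) =>
      (1 + ‖z‖ ^ p)⁻¹ * ‖z‖ ^ β := by
    apply Continuous.mul
    · apply Continuous.inv₀
      · exact continuous_const.add (continuous_norm.rpow_const fun z => Or.inr hp0.le)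
      · intro z
        have : (0:ℝ) ≤ ‖z‖ ^ p := Real.rpow_nonneg (norm_nonneg z) p
        positivity
    · exact continuous_norm.rpow_const fun z => Or.inr hβ
  have hint : Integrable (fun z : EuclideanSpace ℝ (Fin n) =>
      (2:ℝ) ^ p * (1 + ‖z‖) ^ (-(p - β))) := by
    refine (integrable_one_add_norm ?_).const_mul _
    rw [finrank_euclideanSpace_fin]; linarith
  refine hint.mono' hcont.aestronglyMeasurable (Filter.Eventually.of_forall fun z => ?_)
  set r : ℝ := ‖z‖ with hr_def
  have hr : 0 ≤ r := norm_nonneg z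
  have hb0 : (0:ℝ) ≤ (1 + r ^ p)⁻¹ * r ^ β := by
    have : (0:ℝ) ≤ r ^ p := Real.rpow_nonneg hr p
    have : (0:ℝ) ≤ r ^ β := Real.rpow_nonneg hr β
    positivity
  rw [Real.norm_eq_abs, abs_of_nonneg hb0]
  -- key inequality: (1+r^p)⁻¹ r^β ≤ 2^p (1+r)^{-(p-β)}
  have h1r : (0:ℝ) < 1 + r := by linarith
  have hmax : (max 1 r) ^ p ≤ 1 + r ^ p := by
    rcases le_total r 1 with h | h
    · rw [max_eq_left h, Real.one_rpow]
      have : (0:ℝ) ≤ r ^ p := Real.rpow_nonneg hr p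
      linarith
    · rw [max_eq_right h]
      linarith
  have h1 : (1 + r) ^ p ≤ 2 ^ p * (1 + r ^ p) := by
    have hle : 1 + r ≤ 2 * max 1 r := by
      rcases le_total r 1 with h | h
      · rw [max_eq_left h]; linarith
      · rw [max_eq_right h]; linarith
    calc (1 + r) ^ p ≤ (2 * max 1 r) ^ p := Real.rpow_le_rpow h1r.le hle hp0.le
      _ = 2 ^ p * (max 1 r) ^ p := Real.mul_rpow (by norm_num) (le_max_of_le_left one_pos.le)
      _ ≤ 2 ^ p * (1 + r ^ p) := by
          have h2p : (0:ℝ) < 2 ^ p := Real.rpow_pos_of_pos (by norm_num) p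
          nlinarith
  have hrp0 : (0:ℝ) < 1 + r ^ p := by
    have : (0:ℝ) ≤ r ^ p := Real.rpow_nonneg hr p
    linarith
  have h2p : (0:ℝ) < 2 ^ p := Real.rpow_pos_of_pos (by norm_num) p
  have h1rp : (0:ℝ) < (1 + r) ^ p := Real.rpow_pos_of_pos h1r p
  have hinv : (1 + r ^ p)⁻¹ ≤ 2 ^ p * ((1 + r) ^ p)⁻¹ := by
    have hd : (1 + r) ^ p / 2 ^ p ≤ 1 + r ^ p := by
      rw [div_le_iff₀ h2p]; nlinarith
    have hd0 : (0:ℝ) < (1 + r) ^ p / 2 ^ p := by positivity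
    have := inv_anti₀ hd0 hd
    rwa [inv_div, div_eq_mul_inv] at this
  have hrβ : r ^ β ≤ (1 + r) ^ β := Real.rpow_le_rpow hr (by linarith) hβ
  have hsplit : (1 + r) ^ (-(p - β)) = (1 + r) ^ β * ((1 + r) ^ p)⁻¹ := by
    rw [← Real.rpow_neg h1r.le, ← Real.rpow_add h1r]
    ring_nf
  calc (1 + r ^ p)⁻¹ * r ^ β ≤ (2 ^ p * ((1 + r) ^ p)⁻¹) * (1 + r) ^ β := by
        apply mul_le_mul hinv hrβ (Real.rpow_nonneg hr β)
        positivity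
    _ = 2 ^ p * (1 + r) ^ (-(p - β)) := by rw [hsplit]; ring

-- scaling identity for the translated/scaled integrand
lemma stmt8_scale (n : ℕ) (p β s : ℝ) (hβ : 0 ≤ β) (hs : 0 < s)
    (x : EuclideanSpace ℝ (Fin n)) :
    (∫ y : EuclideanSpace ℝ (Fin n),
        (s ^ n)⁻¹ * ((1 + (s⁻¹ * ‖x - y‖) ^ p)⁻¹ * ‖x - y‖ ^ β)) =
      s ^ β * ∫ z : EuclideanSpace ℝ (Fin n), (1 + ‖z‖ ^ p)⁻¹ * ‖z‖ ^ β := by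
  have hs' : s ≠ 0 := hs.ne'
  set F : EuclideanSpace ℝ (Fin n) → ℝ := fun z => (1 + ‖z‖ ^ p)⁻¹ * ‖z‖ ^ β with hF
  have hpt : ∀ y : EuclideanSpace ℝ (Fin n),
      (s ^ n)⁻¹ * ((1 + (s⁻¹ * ‖x - y‖) ^ p)⁻¹ * ‖x - y‖ ^ β) =
      ((s ^ n)⁻¹ * s ^ β) * F (s⁻¹ • (x - y)) := by
    intro y
    have hnorm : ‖s⁻¹ • (x - y)‖ = s⁻¹ * ‖x - y‖ := by
      rw [norm_smul, Real.norm_eq_abs, abs_inv, abs_of_pos hs]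
    have hxy : ‖x - y‖ ^ β = s ^ β * ‖s⁻¹ • (x - y)‖ ^ β := by
      rw [hnorm, ← Real.mul_rpow hs.le (by positivity)]
      rw [mul_inv_cancel_left₀ hs']
    rw [hF]
    simp only [hxy, hnorm]
    ring
  simp_rw [hpt]
  rw [integral_const_mul]
  rw [MeasureTheory.integral_sub_left_eq_self (fun w => F (s⁻¹ • w)) volume x]
  rw [MeasureTheory.Measure.integral_comp_inv_smul_of_nonneg volume F hs.le]
  rw [finrank_euclideanSpace_fin, smul_eq_mul]
  field_simp

-- integrability of the translated/scaled integrand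
lemma stmt8_scale_int (n : ℕ) (p β s : ℝ) (hβ : 0 ≤ β) (hs : 0 < s)
    (x : EuclideanSpace ℝ (Fin n))
    (hF : Integrable (fun z : EuclideanSpace ℝ (Fin n) => (1 + ‖z‖ ^ p)⁻¹ * ‖z‖ ^ β)) :
    Integrable (fun y : EuclideanSpace ℝ (Fin n) =>
        (s ^ n)⁻¹ * ((1 + (s⁻¹ * ‖x - y‖) ^ p)⁻¹ * ‖x - y‖ ^ β)) := by
  have hs' : s ≠ 0 := hs.ne'
  set F : EuclideanSpace ℝ (Fin n) → ℝ := fun z => (1 + ‖z‖ ^ p)⁻¹ * ‖z‖ ^ β with hF_def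
  have h1 : Integrable (fun w : EuclideanSpace ℝ (Fin n) => F (s⁻¹ • w)) :=
    (MeasureTheory.integrable_comp_smul_iff volume F (inv_ne_zero hs')).2 hF
  have h2 : Integrable (fun y : EuclideanSpace ℝ (Fin n) => F (s⁻¹ • (x - y))) :=
    h1.comp_sub_left x
  have h3 := (h2.const_mul ((s ^ n)⁻¹ * s ^ β))
  refine h3.congr (Filter.Eventually.of_forall fun y => ?_)
  have hnorm : ‖s⁻¹ • (x - y)‖ = s⁻¹ * ‖x - y‖ := by
    rw [norm_smul, Real.norm_eq_abs, abs_inv, abs_of_pos hs]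
  have hxy : ‖x - y‖ ^ β = s ^ β * ‖s⁻¹ • (x - y)‖ ^ β := by
    rw [hnorm, ← Real.mul_rpow hs.le (by positivity)]
    rw [mul_inv_cancel_left₀ hs']
  rw [hF_def]
  simp only [hxy, hnorm]
  ring

set_option maxHeartbeats 2000000 in
theorem statement_8 (n : ℕ) (hn : 1 ≤ n) (α γ : ℝ) (hα : 0 < α) (hα1 : α < 1)
    (hγ : 0 < γ) (hγ2 : γ < 2 * α) :
    ∃ c C : ℝ, 0 < c ∧ c ≤ C ∧ ∀ t : ℝ, 0 < t → ∀ x : EuclideanSpace ℝ (Fin n),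
      ((∫ y, (t ^ (-(n : ℝ) / (2 * α)) *
            (1 + (t ^ (-(1 / (2 * α))) * ‖x - y‖) ^ ((n : ℝ) + 2 * α))⁻¹) * ‖y‖ ^ γ) ≤
          C * (‖x‖ ^ γ + t ^ (γ / (2 * α)))) ∧
      (t ^ (1 / (2 * α)) ≤ ‖x‖ →
        c * ‖x‖ ^ γ ≤
          ∫ y, (t ^ (-(n : ℝ) / (2 * α)) *
            (1 + (t ^ (-(1 / (2 * α))) * ‖x - y‖) ^ ((n : ℝ) + 2 * α))⁻¹) * ‖y‖ ^ γ) := by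
  have h2α : (0:ℝ) < 2 * α := by linarith
  have h2γ : (0:ℝ) < 2 ^ γ := Real.rpow_pos_of_pos (by norm_num) γ
  set p : ℝ := (n : ℝ) + 2 * α with hp_def
  have hn0 : (0:ℝ) ≤ (n:ℝ) := Nat.cast_nonneg n
  have hp0 : (0:ℝ) < p := by rw [hp_def]; linarith
  have hA_int : Integrable
      (fun z : EuclideanSpace ℝ (Fin n) => (1 + ‖z‖ ^ p)⁻¹ * ‖z‖ ^ (0:ℝ)) :=
    stmt8_integrable n le_rfl (by rw [hp_def]; linarith)
  have hB_int : Integrable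
      (fun z : EuclideanSpace ℝ (Fin n) => (1 + ‖z‖ ^ p)⁻¹ * ‖z‖ ^ γ) :=
    stmt8_integrable n hγ.le (by rw [hp_def]; linarith)
  set A : ℝ := ∫ z : EuclideanSpace ℝ (Fin n), (1 + ‖z‖ ^ p)⁻¹ * ‖z‖ ^ (0:ℝ) with hA_def
  set B : ℝ := ∫ z : EuclideanSpace ℝ (Fin n), (1 + ‖z‖ ^ p)⁻¹ * ‖z‖ ^ γ with hB_def
  have hA0 : 0 ≤ A := by
    refine integral_nonneg fun z => ?_
    have h1 : (0:ℝ) ≤ ‖z‖ ^ p := Real.rpow_nonneg (norm_nonneg z) p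
    have h2 : (0:ℝ) ≤ ‖z‖ ^ (0:ℝ) := Real.rpow_nonneg (norm_nonneg z) 0
    positivity
  have hB0 : 0 ≤ B := by
    refine integral_nonneg fun z => ?_
    have h1 : (0:ℝ) ≤ ‖z‖ ^ p := Real.rpow_nonneg (norm_nonneg z) p
    have h2 : (0:ℝ) ≤ ‖z‖ ^ γ := Real.rpow_nonneg (norm_nonneg z) γ
    positivity
  haveI : Nontrivial (EuclideanSpace ℝ (Fin n)) :=
    Module.nontrivial_of_finrank_pos (R := ℝ) (by rw [finrank_euclideanSpace_fin]; omega)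
  set V : ℝ := (volume (ball (0 : EuclideanSpace ℝ (Fin n)) 1)).toReal with hV_def
  have hV0 : 0 < V :=
    ENNReal.toReal_pos (measure_ball_pos volume _ one_pos).ne' measure_ball_lt_top.ne
  set c0 : ℝ := V / (2 ^ (n + 1) * 2 ^ γ) with hc0_def
  have hc0 : 0 < c0 := by rw [hc0_def]; positivity
  set C0 : ℝ := 2 ^ γ * (A + B) with hC0_def
  clear_value A B V
  refine ⟨c0, max C0 c0, hc0, le_max_right _ _, ?_⟩
  intro t ht x
  set s : ℝ := t ^ (1/(2*α)) with hs_def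
  have hs : 0 < s := Real.rpow_pos_of_pos ht _
  have hs' : s ≠ 0 := hs.ne'
  have hsn : (s:ℝ) ^ n ≠ 0 := pow_ne_zero _ hs.ne'
  have hti : t ^ (-(1/(2*α))) = s⁻¹ := by rw [Real.rpow_neg ht.le]
  have htn : t ^ (-(n:ℝ)/(2*α)) = (s ^ n)⁻¹ := by
    have h1 : (s:ℝ) ^ n = t ^ ((n:ℝ)/(2*α)) := by
      rw [hs_def, ← Real.rpow_natCast (t ^ (1/(2*α))) n, ← Real.rpow_mul ht.le]
      congr 1
      field_simp
    rw [h1, ← Real.rpow_neg ht.le]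
    congr 1
    ring
  have htγ : t ^ (γ/(2*α)) = s ^ γ := by
    rw [hs_def, ← Real.rpow_mul ht.le]
    congr 1
    field_simp
  -- the transformed integrand
  set G : EuclideanSpace ℝ (Fin n) → ℝ := fun y =>
    (s ^ n)⁻¹ * ((1 + (s⁻¹ * ‖x - y‖) ^ p)⁻¹ * ‖y‖ ^ γ) with hG_def
  set H0 : EuclideanSpace ℝ (Fin n) → ℝ := fun y =>
    (s ^ n)⁻¹ * ((1 + (s⁻¹ * ‖x - y‖) ^ p)⁻¹ * ‖x - y‖ ^ (0:ℝ)) with hH0_def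
  set Hγ : EuclideanSpace ℝ (Fin n) → ℝ := fun y =>
    (s ^ n)⁻¹ * ((1 + (s⁻¹ * ‖x - y‖) ^ p)⁻¹ * ‖x - y‖ ^ γ) with hHγ_def
  have hH0_int : Integrable H0 := stmt8_scale_int n p 0 s le_rfl hs x hA_int
  have hHγ_int : Integrable Hγ := stmt8_scale_int n p γ s hγ.le hs x hB_int
  have hH0_val : (∫ y, H0 y) = s ^ (0:ℝ) * A := by
    rw [hA_def]; exact stmt8_scale n p 0 s le_rfl hs x
  have hHγ_val : (∫ y, Hγ y) = s ^ γ * B := by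
    rw [hB_def]; exact stmt8_scale n p γ s hγ.le hs x
  have hEq : (∫ y : EuclideanSpace ℝ (Fin n), (t ^ (-(n : ℝ) / (2 * α)) *
      (1 + (t ^ (-(1 / (2 * α))) * ‖x - y‖) ^ p)⁻¹) * ‖y‖ ^ γ) = ∫ y, G y := by
    congr 1
    funext y
    rw [htn, hti, hG_def, mul_assoc]
  -- nonnegativity and pointwise bound
  have hbase : ∀ y : EuclideanSpace ℝ (Fin n), (0:ℝ) ≤ s⁻¹ * ‖x - y‖ := fun y =>
    mul_nonneg (inv_nonneg.2 hs.le) (norm_nonneg _)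
  have hden : ∀ y : EuclideanSpace ℝ (Fin n), (0:ℝ) < 1 + (s⁻¹ * ‖x - y‖) ^ p := by
    intro y
    have := Real.rpow_nonneg (hbase y) p
    linarith
  have hG0 : ∀ y, 0 ≤ G y := by
    intro y
    have h1 := (hden y).le
    have h2 : (0:ℝ) ≤ ‖y‖ ^ γ := Real.rpow_nonneg (norm_nonneg y) γ
    have h3 : (0:ℝ) ≤ (s ^ n)⁻¹ := inv_nonneg.2 (pow_nonneg hs.le n)
    rw [hG_def]
    have h4 : (0:ℝ) ≤ (1 + (s⁻¹ * ‖x - y‖) ^ p)⁻¹ := inv_nonneg.2 h1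
    exact mul_nonneg h3 (mul_nonneg h4 h2)
  have hdom : ∀ y, G y ≤ 2 ^ γ * ‖x‖ ^ γ * H0 y + 2 ^ γ * Hγ y := by
    intro y
    have hy : ‖y‖ ≤ ‖x‖ + ‖x - y‖ := by
      have h : y = x - (x - y) := by abel
      calc ‖y‖ = ‖x - (x - y)‖ := by rw [← h]
        _ ≤ ‖x‖ + ‖x - y‖ := norm_sub_le _ _
    have h1 : ‖y‖ ^ γ ≤ (‖x‖ + ‖x - y‖) ^ γ :=
      Real.rpow_le_rpow (norm_nonneg y) hy hγ.le
    have h2 := stmt8_add_rpow_le (norm_nonneg x) (norm_nonneg (x - y)) hγ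
    have hab : (0:ℝ) ≤ (s ^ n)⁻¹ * (1 + (s⁻¹ * ‖x - y‖) ^ p)⁻¹ :=
      mul_nonneg (inv_nonneg.2 (pow_nonneg hs.le n)) (inv_nonneg.2 (hden y).le)
    rw [hG_def, hH0_def, hHγ_def]
    simp only [Real.rpow_zero]
    calc (s ^ n)⁻¹ * ((1 + (s⁻¹ * ‖x - y‖) ^ p)⁻¹ * ‖y‖ ^ γ)
        = ((s ^ n)⁻¹ * (1 + (s⁻¹ * ‖x - y‖) ^ p)⁻¹) * ‖y‖ ^ γ := by ring
      _ ≤ ((s ^ n)⁻¹ * (1 + (s⁻¹ * ‖x - y‖) ^ p)⁻¹) *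
            (2 ^ γ * (‖x‖ ^ γ + ‖x - y‖ ^ γ)) :=
          mul_le_mul_of_nonneg_left (h1.trans h2) hab
      _ = 2 ^ γ * ‖x‖ ^ γ * ((s ^ n)⁻¹ * ((1 + (s⁻¹ * ‖x - y‖) ^ p)⁻¹ * 1)) +
            2 ^ γ * ((s ^ n)⁻¹ * ((1 + (s⁻¹ * ‖x - y‖) ^ p)⁻¹ * ‖x - y‖ ^ γ)) := by ring
  have hRHS_int : Integrable (fun y => 2 ^ γ * ‖x‖ ^ γ * H0 y + 2 ^ γ * Hγ y) :=
    ((hH0_int.const_mul _).add (hHγ_int.const_mul _))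
  have hG_cont : Continuous G := by
    rw [hG_def]
    have hc1 : Continuous fun y : EuclideanSpace ℝ (Fin n) => s⁻¹ * ‖x - y‖ :=
      continuous_const.mul (continuous_const.sub continuous_id).norm
    have hc2 : Continuous fun y : EuclideanSpace ℝ (Fin n) =>
        (1 + (s⁻¹ * ‖x - y‖) ^ p)⁻¹ := by
      refine Continuous.inv₀ (continuous_const.add (hc1.rpow_const fun y => Or.inr hp0.le))
        fun y => (hden y).ne'
    exact continuous_const.mul (hc2.mul (continuous_norm.rpow_const fun y => Or.inr hγ.le))
  have hG_int : Integrable G := by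
    refine hRHS_int.mono' hG_cont.aestronglyMeasurable (Filter.Eventually.of_forall fun y => ?_)
    rw [Real.norm_eq_abs, abs_of_nonneg (hG0 y)]
    exact hdom y
  rw [hEq]
  constructor
  · -- upper bound
    have hmono : (∫ y, G y) ≤ ∫ y, (2 ^ γ * ‖x‖ ^ γ * H0 y + 2 ^ γ * Hγ y) :=
      integral_mono_of_nonneg (Filter.Eventually.of_forall hG0) hRHS_int
        (Filter.Eventually.of_forall hdom)
    have hv1 : (∫ y, 2 ^ γ * ‖x‖ ^ γ * H0 y) = 2 ^ γ * ‖x‖ ^ γ * (1 * A) := by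
      rw [integral_const_mul, hH0_val, Real.rpow_zero]
    have hv2 : (∫ y, 2 ^ γ * Hγ y) = 2 ^ γ * (s ^ γ * B) := by
      rw [integral_const_mul, hHγ_val]
    rw [integral_add (hH0_int.const_mul _) (hHγ_int.const_mul _), hv1, hv2] at hmono
    rw [htγ]
    have hxγ : (0:ℝ) ≤ ‖x‖ ^ γ := Real.rpow_nonneg (norm_nonneg x) γ
    have hsγ : (0:ℝ) ≤ s ^ γ := Real.rpow_nonneg hs.le γ
    have hCle : C0 ≤ max C0 c0 := le_max_left _ _
    have hfin : 2 ^ γ * ‖x‖ ^ γ * (1 * A) + 2 ^ γ * (s ^ γ * B) ≤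
        max C0 c0 * (‖x‖ ^ γ + s ^ γ) := by
      have e1 : (0:ℝ) ≤ (max C0 c0 - C0) * (‖x‖ ^ γ + s ^ γ) :=
        mul_nonneg (by linarith) (by linarith)
      have e2 : (0:ℝ) ≤ 2 ^ γ * B * ‖x‖ ^ γ := mul_nonneg (mul_nonneg h2γ.le hB0) hxγ
      have e3 : (0:ℝ) ≤ 2 ^ γ * A * s ^ γ := mul_nonneg (mul_nonneg h2γ.le hA0) hsγ
      rw [hC0_def] at e1 ⊢
      nlinarith
    linarith
  · -- lower bound
    intro hx
    have hball_le : (∫ y in ball x (s/2), G y) ≤ ∫ y, G y :=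
      setIntegral_le_integral hG_int (Filter.Eventually.of_forall hG0)
    have hconst : ∀ y ∈ ball x (s/2), ((s ^ n)⁻¹ * 2⁻¹ * (‖x‖/2) ^ γ) ≤ G y := by
      intro y hy
      rw [mem_ball, dist_eq_norm] at hy
      have hxy : ‖x - y‖ ≤ s/2 := by
        rw [norm_sub_rev]; exact hy.le
      have hb1 : s⁻¹ * ‖x - y‖ ≤ 1 := by
        have ha : s⁻¹ * ‖x - y‖ ≤ s⁻¹ * (s/2) :=
          mul_le_mul_of_nonneg_left hxy (inv_nonneg.2 hs.le)
        have h2 : s⁻¹ * (s / 2) = 2⁻¹ := by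
          rw [mul_comm, div_mul_eq_mul_div, mul_inv_cancel₀ hs.ne']
          norm_num
        rw [h2] at ha
        linarith
      have h1 : (s⁻¹ * ‖x - y‖) ^ p ≤ 1 := Real.rpow_le_one (hbase y) hb1 hp0.le
      have h2 : (2:ℝ)⁻¹ ≤ (1 + (s⁻¹ * ‖x - y‖) ^ p)⁻¹ := by
        apply inv_anti₀ (hden y) (by linarith)
      have h3 : ‖x‖/2 ≤ ‖y‖ := by
        have hnn := norm_sub_norm_le x y
        linarith
      have h4 : (‖x‖/2) ^ γ ≤ ‖y‖ ^ γ :=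
        Real.rpow_le_rpow (by positivity) h3 hγ.le
      rw [hG_def]
      have h5 : (2:ℝ)⁻¹ * (‖x‖/2) ^ γ ≤ (1 + (s⁻¹ * ‖x - y‖) ^ p)⁻¹ * ‖y‖ ^ γ :=
        mul_le_mul h2 h4 (by positivity) (inv_nonneg.2 (hden y).le)
      have h6 : (0:ℝ) ≤ (s ^ n)⁻¹ := inv_nonneg.2 (pow_nonneg hs.le n)
      calc (s ^ n)⁻¹ * 2⁻¹ * (‖x‖/2) ^ γ = (s ^ n)⁻¹ * (2⁻¹ * (‖x‖/2) ^ γ) := by ring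
        _ ≤ (s ^ n)⁻¹ * ((1 + (s⁻¹ * ‖x - y‖) ^ p)⁻¹ * ‖y‖ ^ γ) :=
            mul_le_mul_of_nonneg_left h5 h6
    have hlow := setIntegral_ge_of_const_le_real measurableSet_ball measure_ball_lt_top.ne
      hconst hG_int.integrableOn
    have hμr : (volume (ball x (s/2))).toReal = (s/2) ^ n * V := by
      rw [Measure.addHaar_ball volume x (by positivity : (0:ℝ) ≤ s/2),
        finrank_euclideanSpace_fin, ENNReal.toReal_mul,
        ENNReal.toReal_ofReal (by positivity), hV_def]
    rw [measureReal_def, hμr] at hlow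
    have heq : ((s ^ n)⁻¹ * 2⁻¹ * (‖x‖/2) ^ γ) * ((s/2) ^ n * V) = c0 * ‖x‖ ^ γ := by
      rw [hc0_def, Real.div_rpow (norm_nonneg x) (by norm_num), div_pow]
      have h2γ' : (2:ℝ) ^ γ ≠ 0 := h2γ.ne'
      field_simp
      ring
    rw [heq] at hlow
    linarith
end

section
/- Let α ∈ (0,1), γ ∈ (0,2α), and in dimension n = 1 let W_γ(x) = (x_−)^γ (where x_− = max(−x,0)) and q(t,x) = t^{-1/(2α)}(1 + (t^{-1/(2α)}|x|)^{1+2α})^{-1}. Then there exist constants 0 < c_γ ≤ C_γ depending only on α and γ such that for all t > 0 and x < 0: c_γ (|x|^γ + t^{γ/(2α)}) ≤ (q(t,·) ∗ W_γ)(x) ≤ C_γ (|x|^γ + t^{γ/(2α)}). -/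
open MeasureTheory Set Real
set_option maxHeartbeats 1000000
open MeasureTheory Set Real

lemma aux_meas (δ β : ℝ) : Measurable (fun u : ℝ => |u| ^ δ * (1 + |u| ^ β)⁻¹) :=
  (measurable_abs.pow_const δ).mul ((measurable_const.add (measurable_abs.pow_const β)).inv)

lemma aux_nonneg (δ β : ℝ) (u : ℝ) : 0 ≤ |u| ^ δ * (1 + |u| ^ β)⁻¹ :=
  mul_nonneg (rpow_nonneg (abs_nonneg u) δ)
    (inv_nonneg.2 (by positivity))

lemma aux_int (δ β : ℝ) (hδ : 0 ≤ δ) (hβ : δ < β - 1) :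
    Integrable (fun u : ℝ => |u| ^ δ * (1 + |u| ^ β)⁻¹) := by
  set f : ℝ → ℝ := fun u : ℝ => |u| ^ δ * (1 + |u| ^ β)⁻¹ with hf
  have hmeas := aux_meas δ β
  have hIoi : ∀ a : ℝ, 0 ≤ a → IntegrableOn f (Ioi a) := by
    intro a ha
    have h01 : IntegrableOn f (Ioc a 1) := by
      apply Measure.integrableOn_of_bounded (M := 1) (measure_Ioc_lt_top).ne
        hmeas.aestronglyMeasurable
      filter_upwards [ae_restrict_mem measurableSet_Ioc] with u hu
      have h1 : |u| ≤ 1 := by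
        rw [abs_le]; constructor <;> [linarith [hu.1]; exact hu.2]
      have : |u| ^ δ ≤ 1 := Real.rpow_le_one (abs_nonneg u) h1 hδ
      have h2 : (1 + |u| ^ β)⁻¹ ≤ 1 := by
        rw [inv_le_one_iff₀]; right; nlinarith [rpow_nonneg (abs_nonneg u) β]
      rw [Real.norm_eq_abs, abs_of_nonneg (aux_nonneg δ β u)]
      nlinarith [aux_nonneg δ β u, rpow_nonneg (abs_nonneg u) δ,
        inv_nonneg.2 (by positivity : (0:ℝ) ≤ 1 + |u| ^ β)]
    have h1i : IntegrableOn f (Ioi 1) := by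
      have hbase : IntegrableOn (fun u : ℝ => u ^ (δ - β)) (Ioi 1) :=
        (integrableOn_Ioi_rpow_iff zero_lt_one).2 (by linarith)
      apply hbase.mono' hmeas.aestronglyMeasurable.restrict
      filter_upwards [ae_restrict_mem measurableSet_Ioi] with u hu
      have hu0 : (0:ℝ) < u := lt_trans one_pos hu
      have habs : |u| = u := abs_of_pos hu0
      rw [Real.norm_eq_abs, abs_of_nonneg (aux_nonneg δ β u), habs]
      have h3 : (1 + u ^ β)⁻¹ ≤ (u ^ β)⁻¹ := by
        apply inv_anti₀ (rpow_pos_of_pos hu0 β)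
        linarith
      calc u ^ δ * (1 + u ^ β)⁻¹ ≤ u ^ δ * (u ^ β)⁻¹ :=
            mul_le_mul_of_nonneg_left h3 (rpow_nonneg hu0.le δ)
        _ = u ^ (δ - β) := by rw [← rpow_neg hu0.le, ← rpow_add hu0]; ring_nf
    have : Ioi a ⊆ Ioc a 1 ∪ Ioi 1 := by
      intro u hu
      rcases le_or_gt u 1 with h | h
      · exact Or.inl ⟨hu, h⟩
      · exact Or.inr h
    exact (h01.union h1i).mono_set this
  have hIio : IntegrableOn f (Iio 0) := by
    have e : MeasurableEmbedding (fun x : ℝ => -x) :=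
      (Homeomorph.neg ℝ).measurableEmbedding
    have hmap : (volume : Measure ℝ).restrict (Iio 0)
        = Measure.map (fun x : ℝ => -x) ((volume : Measure ℝ).restrict (Ioi 0)) := by
      have h1 : Measure.map (fun x : ℝ => -x) (volume : Measure ℝ) = volume := by
        exact Measure.map_neg_eq_self volume
      have h2 := e.restrict_map (volume : Measure ℝ) (Iio (0:ℝ))
      rw [h1] at h2
      rw [h2]
      congr 1
      ext u
      simp
    rw [IntegrableOn, hmap, e.integrable_map_iff]
    have : (f ∘ fun x : ℝ => -x) = f := by
      ext u; simp [hf, abs_neg]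
    rw [this]
    exact hIoi 0 le_rfl
  have : Integrable f := by
    rw [← integrableOn_univ]
    have : (univ : Set ℝ) = Iio 0 ∪ Ici 0 := (Iio_union_Ici).symm
    rw [this]
    exact hIio.union ((integrableOn_Ici_iff_integrableOn_Ioi).2 (hIoi 0 le_rfl))
  exact this

lemma rpow_add_le_two_rpow (γ a b : ℝ) (hγ : 0 ≤ γ) (ha : 0 ≤ a) (hb : 0 ≤ b) :
    (a + b) ^ γ ≤ 2 ^ γ * (a ^ γ + b ^ γ) := by
  have h1 : a + b ≤ 2 * max a b := by
    rcases max_cases a b with ⟨h, h'⟩ | ⟨h, h'⟩ <;> rw [h] <;> linarith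
  calc (a + b) ^ γ ≤ (2 * max a b) ^ γ :=
        Real.rpow_le_rpow (by linarith) h1 hγ
    _ = 2 ^ γ * (max a b) ^ γ := Real.mul_rpow (by norm_num) (le_max_of_le_left ha)
    _ ≤ 2 ^ γ * (a ^ γ + b ^ γ) := by
        apply mul_le_mul_of_nonneg_left _ (Real.rpow_nonneg (by norm_num) γ)
        rcases max_cases a b with ⟨h, _⟩ | ⟨h, _⟩ <;> rw [h] <;>
          nlinarith [Real.rpow_nonneg ha γ, Real.rpow_nonneg hb γ]

section Main

variable (α γ : ℝ)

/-- the scale-free integrand -/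
noncomputable def G (β w z : ℝ) : ℝ := (1 + |w - z| ^ β)⁻¹ * (max (-z) 0) ^ γ

lemma G_nonneg (β w z : ℝ) : 0 ≤ G γ β w z :=
  mul_nonneg (inv_nonneg.2 (by positivity)) (Real.rpow_nonneg (le_max_right _ _) γ)

lemma G_meas (β w : ℝ) : Measurable (G γ β w) :=
  ((measurable_const.add (((measurable_const.sub measurable_id).abs).pow_const β)).inv).mul
    ((measurable_id.neg.max measurable_const).pow_const γ)

lemma G_le (β w z : ℝ) (hγ : 0 ≤ γ) :
    G γ β w z ≤ 2 ^ γ * (|w| ^ γ * (1 + |w - z| ^ β)⁻¹ + |w - z| ^ γ * (1 + |w - z| ^ β)⁻¹) := by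
  have hk : (0:ℝ) ≤ (1 + |w - z| ^ β)⁻¹ := inv_nonneg.2 (by positivity)
  have hm : max (-z) 0 ≤ |w| + |w - z| := by
    rcases max_cases (-z) 0 with ⟨h, _⟩ | ⟨h, _⟩ <;> rw [h] <;>
      [skip; positivity]
    have : -z = -(w) + (w - z) := by ring
    rw [this]
    exact add_le_add (neg_le_abs w) (le_abs_self _)
  have h1 : (max (-z) 0) ^ γ ≤ 2 ^ γ * (|w| ^ γ + |w - z| ^ γ) := by
    calc (max (-z) 0) ^ γ ≤ (|w| + |w - z|) ^ γ :=
          Real.rpow_le_rpow (le_max_right _ _) hm hγ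
      _ ≤ 2 ^ γ * (|w| ^ γ + |w - z| ^ γ) :=
          rpow_add_le_two_rpow γ _ _ hγ (abs_nonneg w) (abs_nonneg _)
  calc G γ β w z = (max (-z) 0) ^ γ * (1 + |w - z| ^ β)⁻¹ := mul_comm _ _
    _ ≤ (2 ^ γ * (|w| ^ γ + |w - z| ^ γ)) * (1 + |w - z| ^ β)⁻¹ :=
        mul_le_mul_of_nonneg_right h1 hk
    _ = 2 ^ γ * (|w| ^ γ * (1 + |w - z| ^ β)⁻¹ + |w - z| ^ γ * (1 + |w - z| ^ β)⁻¹) := by ring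


lemma G_dom_integrable (β w : ℝ) (hγ1 : 0 < γ) (hβ1 : 1 < β) (hγβ : γ < β - 1) :
    Integrable (fun z : ℝ =>
      2 ^ γ * (|w| ^ γ * (1 + |w - z| ^ β)⁻¹ + |w - z| ^ γ * (1 + |w - z| ^ β)⁻¹)) := by
  have intA : Integrable (fun u : ℝ => (1 + |u| ^ β)⁻¹) := by
    have := aux_int 0 β le_rfl (by linarith)
    simpa [Real.rpow_zero] using this
  have intB : Integrable (fun u : ℝ => |u| ^ γ * (1 + |u| ^ β)⁻¹) :=
    aux_int γ β hγ1.le hγβ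
  have i1 : Integrable (fun z : ℝ => (1 + |w - z| ^ β)⁻¹) := intA.comp_sub_left w
  have i2 : Integrable (fun z : ℝ => |w - z| ^ γ * (1 + |w - z| ^ β)⁻¹) :=
    intB.comp_sub_left w
  exact ((i1.const_mul _).add i2).const_mul _

lemma G_integrable (β w : ℝ) (hγ1 : 0 < γ) (hβ1 : 1 < β) (hγβ : γ < β - 1) :
    Integrable (G γ β w) := by
  refine (G_dom_integrable γ β w hγ1 hβ1 hγβ).mono'
    (G_meas γ β w).aestronglyMeasurable (ae_of_all _ fun z => ?_)
  rw [Real.norm_eq_abs, abs_of_nonneg (G_nonneg γ β w z)]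
  exact G_le γ β w z hγ1.le

lemma F_est (β : ℝ) (hγ1 : 0 < γ) (hβ1 : 1 < β) (hγβ : γ < β - 1) :
    ∃ c C : ℝ, 0 < c ∧ c ≤ C ∧ ∀ w : ℝ, w < 0 →
      c * (|w| ^ γ + 1) ≤ (∫ z, G γ β w z) ∧ (∫ z, G γ β w z) ≤ C * (|w| ^ γ + 1) := by
  have intA : Integrable (fun u : ℝ => (1 + |u| ^ β)⁻¹) := by
    have := aux_int 0 β le_rfl (by linarith)
    simpa [Real.rpow_zero] using this
  have intB : Integrable (fun u : ℝ => |u| ^ γ * (1 + |u| ^ β)⁻¹) :=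
    aux_int γ β hγ1.le hγβ
  set A : ℝ := ∫ u : ℝ, (1 + |u| ^ β)⁻¹ with hA
  set B : ℝ := ∫ u : ℝ, |u| ^ γ * (1 + |u| ^ β)⁻¹ with hB
  have hA0 : 0 ≤ A := integral_nonneg fun u => inv_nonneg.2 (by positivity)
  have hB0 : 0 ≤ B := integral_nonneg fun u =>
    mul_nonneg (Real.rpow_nonneg (abs_nonneg u) γ) (inv_nonneg.2 (by positivity))
  have h2β : (0:ℝ) < 1 + 2 ^ β := by positivity
  have h2γ : (0:ℝ) ≤ 2 ^ γ := Real.rpow_nonneg (by norm_num) γ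
  refine ⟨(1 + 2 ^ β)⁻¹ / 2, (1 + 2 ^ β)⁻¹ / 2 + 2 ^ γ * (A + B), by positivity,
    by nlinarith, fun w hw => ?_⟩
  have intG := G_integrable γ β w hγ1 hβ1 hγβ
  have intD := G_dom_integrable γ β w hγ1 hβ1 hγβ
  have hwγ : (0:ℝ) ≤ |w| ^ γ := Real.rpow_nonneg (abs_nonneg w) γ
  constructor
  · -- lower bound
    have hsub : ∫ z in Icc (w-2) (w-1), G γ β w z ≤ ∫ z, G γ β w z :=
      setIntegral_le_integral intG (ae_of_all _ (G_nonneg γ β w))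
    have hpt : ∀ z ∈ Icc (w-2) (w-1), (1 + 2 ^ β)⁻¹ * ((|w| ^ γ + 1)/2) ≤ G γ β w z := by
      rintro z ⟨hz1, hz2⟩
      have hk : (1 + 2 ^ β)⁻¹ ≤ (1 + |w - z| ^ β)⁻¹ := by
        apply inv_anti₀ (by positivity)
        have : |w - z| ≤ 2 := abs_le.2 ⟨by linarith, by linarith⟩
        have := Real.rpow_le_rpow (abs_nonneg _) this (by linarith : (0:ℝ) ≤ β)
        linarith
      have hm : 1 + |w| ≤ max (-z) 0 := by
        have : 1 + |w| ≤ -z := by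
          rw [abs_of_neg hw]; linarith
        exact le_trans this (le_max_left _ _)
      have hmγ : (|w| ^ γ + 1)/2 ≤ (max (-z) 0) ^ γ := by
        have h1w : (1 + |w|) ^ γ ≤ (max (-z) 0) ^ γ :=
          Real.rpow_le_rpow (by positivity) hm hγ1.le
        rcases le_or_gt (|w|) 1 with h | h
        · have h2 : |w| ^ γ ≤ 1 := Real.rpow_le_one (abs_nonneg w) h hγ1.le
          have h3 : (1:ℝ) ≤ (1 + |w|) ^ γ := by
            calc (1:ℝ) = 1 ^ γ := (Real.one_rpow γ).symm
              _ ≤ (1 + |w|) ^ γ := Real.rpow_le_rpow zero_le_one (by linarith [abs_nonneg w]) hγ1.le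
          linarith
        · have h2 : (1:ℝ) ≤ |w| ^ γ := Real.one_le_rpow h.le hγ1.le
          have h3 : |w| ^ γ ≤ (1 + |w|) ^ γ :=
            Real.rpow_le_rpow (abs_nonneg w) (by linarith) hγ1.le
          linarith
      calc (1 + 2 ^ β)⁻¹ * ((|w| ^ γ + 1)/2)
          ≤ (1 + |w - z| ^ β)⁻¹ * (max (-z) 0) ^ γ :=
            mul_le_mul hk hmγ (by positivity) (inv_nonneg.2 (by positivity))
        _ = G γ β w z := rfl
    have hvol : ((volume : Measure ℝ) (Icc (w-2) (w-1))).toReal = 1 := by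
      rw [Real.volume_Icc, show w - 1 - (w - 2) = 1 by ring]
      simp
    have hset := setIntegral_ge_of_const_le measurableSet_Icc
      (by rw [Real.volume_Icc]; exact ENNReal.ofReal_ne_top) hpt intG.integrableOn
    rw [measureReal_def, hvol, one_smul] at hset
    calc (1 + 2 ^ β)⁻¹ / 2 * (|w| ^ γ + 1)
        = (1 + 2 ^ β)⁻¹ * ((|w| ^ γ + 1)/2) * 1 := by ring
      _ ≤ ∫ z in Icc (w-2) (w-1), G γ β w z := by rw [mul_one]; exact hset
      _ ≤ ∫ z, G γ β w z := hsub
  · -- upper bound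
    have e1 : ∫ z : ℝ, (1 + |w - z| ^ β)⁻¹ = A :=
      integral_sub_left_eq_self (fun u : ℝ => (1 + |u| ^ β)⁻¹) volume w
    have e2 : ∫ z : ℝ, |w - z| ^ γ * (1 + |w - z| ^ β)⁻¹ = B :=
      integral_sub_left_eq_self (fun u : ℝ => |u| ^ γ * (1 + |u| ^ β)⁻¹) volume w
    have i1 : Integrable (fun z : ℝ => (1 + |w - z| ^ β)⁻¹) := intA.comp_sub_left w
    have i2 : Integrable (fun z : ℝ => |w - z| ^ γ * (1 + |w - z| ^ β)⁻¹) :=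
      intB.comp_sub_left w
    have hDint : (∫ z : ℝ, 2 ^ γ * (|w| ^ γ * (1 + |w - z| ^ β)⁻¹
        + |w - z| ^ γ * (1 + |w - z| ^ β)⁻¹)) = 2 ^ γ * (|w| ^ γ * A + B) := by
      rw [integral_const_mul, integral_add (i1.const_mul _) i2, integral_const_mul, e1, e2]
    calc (∫ z, G γ β w z)
        ≤ ∫ z : ℝ, 2 ^ γ * (|w| ^ γ * (1 + |w - z| ^ β)⁻¹
            + |w - z| ^ γ * (1 + |w - z| ^ β)⁻¹) :=
          integral_mono intG intD (fun z => G_le γ β w z hγ1.le)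
      _ = 2 ^ γ * (|w| ^ γ * A + B) := hDint
      _ ≤ ((1 + 2 ^ β)⁻¹ / 2 + 2 ^ γ * (A + B)) * (|w| ^ γ + 1) := by
          have hc2 : (0:ℝ) ≤ (1 + 2 ^ β)⁻¹ / 2 := by positivity
          nlinarith [mul_nonneg h2γ hA0, mul_nonneg h2γ hB0,
            mul_nonneg (mul_nonneg h2γ hB0) hwγ, mul_nonneg (mul_nonneg h2γ hA0) hwγ,
            mul_nonneg hc2 hwγ]

end Main

theorem statement_9 (α γ : ℝ) (hα : 0 < α) (hα1 : α < 1) (hγ : 0 < γ) (hγ2 : γ < 2 * α) :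
    ∃ c C : ℝ, 0 < c ∧ c ≤ C ∧ ∀ t x : ℝ, 0 < t → x < 0 →
      c * (|x| ^ γ + t ^ (γ / (2 * α))) ≤
        (∫ y, (t ^ (-(1 / (2 * α))) *
          (1 + (t ^ (-(1 / (2 * α))) * |x - y|) ^ (1 + 2 * α))⁻¹) * (max (-y) 0) ^ γ) ∧
      (∫ y, (t ^ (-(1 / (2 * α))) *
          (1 + (t ^ (-(1 / (2 * α))) * |x - y|) ^ (1 + 2 * α))⁻¹) * (max (-y) 0) ^ γ) ≤
        C * (|x| ^ γ + t ^ (γ / (2 * α))) := by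
  obtain ⟨c, C, hc, hcC, hF⟩ := F_est γ (1 + 2 * α) hγ (by linarith) (by linarith)
  refine ⟨c, C, hc, hcC, fun t x ht hx => ?_⟩
  set s : ℝ := t ^ (1 / (2 * α)) with hs_def
  have hs : 0 < s := Real.rpow_pos_of_pos ht _
  have hts : t ^ (-(1 / (2 * α))) = s⁻¹ := by
    rw [hs_def, ← Real.rpow_neg ht.le]
  set w : ℝ := x / s with hw_def
  have hw : w < 0 := div_neg_of_neg_of_pos hx hs
  -- rewrite the integral
  have key : (∫ y, (t ^ (-(1 / (2 * α))) *
      (1 + (t ^ (-(1 / (2 * α))) * |x - y|) ^ (1 + 2 * α))⁻¹) * (max (-y) 0) ^ γ)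
      = s ^ γ * ∫ z, G γ (1 + 2 * α) w z := by
    simp only [hts]
    set f : ℝ → ℝ := fun y =>
      (s⁻¹ * (1 + (s⁻¹ * |x - y|) ^ (1 + 2 * α))⁻¹) * (max (-y) 0) ^ γ with hf_def
    have hcomp : ∀ z : ℝ, f (s * z) = (s⁻¹ * s ^ γ) * G γ (1 + 2 * α) w z := by
      intro z
      have h1 : s⁻¹ * |x - s * z| = |w - z| := by
        rw [← abs_of_pos (inv_pos.2 hs), ← abs_mul]
        congr 1
        field_simp [hw_def]
        linarith [show s * w = x by rw [hw_def]; field_simp [hs.ne']]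
      have h2 : max (-(s * z)) 0 = s * max (-z) 0 := by
        rw [mul_max_of_nonneg _ _ hs.le, mul_zero]
        congr 1
        ring
      simp only [hf_def, G, h1, h2]
      rw [Real.mul_rpow hs.le (le_max_right _ _)]
      ring
    have hint : ∫ y, f y = s * ∫ z, f (s * z) := by
      rw [Measure.integral_comp_mul_left f s, abs_of_pos (inv_pos.2 hs), smul_eq_mul,
        ← mul_assoc, mul_inv_cancel₀ hs.ne', one_mul]
    calc ∫ y, f y = s * ∫ z, f (s * z) := hint
      _ = s * ∫ z, (s⁻¹ * s ^ γ) * G γ (1 + 2 * α) w z := by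
          congr 1; exact integral_congr_ae (ae_of_all _ hcomp)
      _ = s * ((s⁻¹ * s ^ γ) * ∫ z, G γ (1 + 2 * α) w z) := by rw [integral_const_mul]
      _ = s ^ γ * ∫ z, G γ (1 + 2 * α) w z := by
          rw [← mul_assoc, ← mul_assoc, mul_inv_cancel₀ hs.ne', one_mul]
  have hsγ : s ^ γ = t ^ (γ / (2 * α)) := by
    rw [hs_def, ← Real.rpow_mul ht.le]
    congr 1
    field_simp
  have hxw : |x| ^ γ = s ^ γ * |w| ^ γ := by
    have : |x| = s * |w| := by
      rw [hw_def, abs_div, abs_of_pos hs]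
      field_simp
    rw [this, Real.mul_rpow hs.le (abs_nonneg _)]
  have hrhs : |x| ^ γ + t ^ (γ / (2 * α)) = s ^ γ * (|w| ^ γ + 1) := by
    rw [hxw, ← hsγ]; ring
  have hsγ0 : 0 ≤ s ^ γ := Real.rpow_nonneg hs.le γ
  obtain ⟨hlow, hup⟩ := hF w hw
  rw [key, hrhs]
  constructor
  · calc c * (s ^ γ * (|w| ^ γ + 1)) = s ^ γ * (c * (|w| ^ γ + 1)) := by ring
      _ ≤ s ^ γ * ∫ z, G γ (1 + 2 * α) w z := mul_le_mul_of_nonneg_left hlow hsγ0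
  · calc s ^ γ * ∫ z, G γ (1 + 2 * α) w z ≤ s ^ γ * (C * (|w| ^ γ + 1)) :=
        mul_le_mul_of_nonneg_left hup hsγ0
      _ = C * (s ^ γ * (|w| ^ γ + 1)) := by ring
end

section
/- Let α ∈ (0,1), a₀ > 0, x₀ ≤ −1, and define V₀ : ℝ → ℝ by V₀(x) = a₀|x|^{-2α} for x ≤ x₀ and V₀(x) = a₀|x₀|^{-2α} for x ≥ x₀. Let q(t,x) = t^{-1/(2α)}(1 + (t^{-1/(2α)}|x|)^{1+2α})^{-1}. Then there are constants c, C > 0 depending only on α such that for all t > 0: (i) (q(t,·) ∗ V₀)(x) ≤ C(1 + |x₀|^{-2α} t) a₀|x|^{-2α} for x < 2x₀; and (ii) (q(t,·) ∗ V₀)(x) ≥ c · t/(t^{1/(2α)+1} + 1) · a₀|x|^{-2α} for x < x₀. -/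
open MeasureTheory Set Real

lemma st10_aux_one_add_rpow {p a : ℝ} (hp : 1 < p) (ha : 0 ≤ a) :
    (1 + a) ^ p ≤ 2 ^ p * (1 + a ^ p) := by
  have hp0 : (0:ℝ) ≤ p := by linarith
  have h1 : (1 + a) ≤ 2 * max 1 a := by
    rcases le_total a 1 with h | h
    · simp [max_eq_left h]; linarith
    · simp [max_eq_right h]; linarith
  have h2 : (1 + a) ^ p ≤ (2 * max 1 a) ^ p :=
    Real.rpow_le_rpow (by linarith) h1 hp0
  have h3 : (2 * max 1 a) ^ p = 2 ^ p * (max 1 a) ^ p :=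
    Real.mul_rpow (by norm_num) (le_max_of_le_left zero_le_one)
  have h4 : (max 1 a) ^ p ≤ 1 + a ^ p := by
    have h5 : (0:ℝ) ≤ a ^ p := Real.rpow_nonneg ha p
    rcases le_total a 1 with h | h
    · rw [max_eq_left h, Real.one_rpow]; linarith
    · rw [max_eq_right h]; linarith
  calc (1+a)^p ≤ (2 * max 1 a)^p := h2
    _ = 2^p * (max 1 a)^p := h3
    _ ≤ 2^p * (1 + a^p) := by
        have : (0:ℝ) ≤ 2^p := Real.rpow_nonneg (by norm_num) p
        nlinarith

lemma st10_h_cont {p : ℝ} (hp : 0 < p) : Continuous (fun u : ℝ => (1 + |u| ^ p)⁻¹) := by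
  apply Continuous.inv₀
  · exact continuous_const.add (continuous_abs.rpow_const (fun _ => Or.inr hp.le))
  · intro u
    have := Real.rpow_nonneg (abs_nonneg u) p
    positivity

lemma st10_h_int {p : ℝ} (hp : 1 < p) : Integrable (fun u : ℝ => (1 + |u| ^ p)⁻¹) := by
  have hbig : Integrable (fun u : ℝ => (2:ℝ) ^ p * (1 + ‖u‖) ^ (-p)) :=
    (integrable_one_add_norm (E := ℝ) (by simpa using hp)).const_mul _
  refine hbig.mono' ((st10_h_cont (by linarith)).aestronglyMeasurable) ?_
  filter_upwards with u
  have h0 : (0:ℝ) ≤ |u| ^ p := Real.rpow_nonneg (abs_nonneg u) p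
  have h1 : (0:ℝ) < 1 + |u| ^ p := by linarith
  rw [Real.norm_eq_abs, abs_of_nonneg (by positivity)]
  have key : (1 + |u|) ^ p ≤ 2 ^ p * (1 + |u| ^ p) :=
    st10_aux_one_add_rpow hp (abs_nonneg u)
  rw [Real.norm_eq_abs, Real.rpow_neg (by positivity : (0:ℝ) ≤ 1 + |u|)]
  rw [inv_le_comm₀ h1 (by positivity), mul_inv, inv_inv,
    inv_mul_le_iff₀ (Real.rpow_pos_of_pos two_pos p)]
  exact key

lemma st10_g_eq {p τ : ℝ} (hτ : 0 < τ) :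
    (fun z : ℝ => τ * (1 + (τ * |z|) ^ p)⁻¹) =
      fun z : ℝ => τ * (fun u : ℝ => (1 + |u| ^ p)⁻¹) (τ * z) := by
  funext z
  simp only [abs_mul, abs_of_pos hτ]

lemma st10_g_int {p τ : ℝ} (hp : 1 < p) (hτ : 0 < τ) :
    Integrable (fun z : ℝ => τ * (1 + (τ * |z|) ^ p)⁻¹) := by
  rw [st10_g_eq hτ]
  exact ((st10_h_int hp).comp_mul_left' hτ.ne').const_mul τ

lemma st10_g_integral {p τ : ℝ} (hp : 1 < p) (hτ : 0 < τ) :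
    ∫ z : ℝ, τ * (1 + (τ * |z|) ^ p)⁻¹ = ∫ u : ℝ, (1 + |u| ^ p)⁻¹ := by
  rw [st10_g_eq hτ, integral_const_mul,
    MeasureTheory.Measure.integral_comp_mul_left (fun u : ℝ => (1 + |u| ^ p)⁻¹) τ]
  rw [abs_of_pos (inv_pos.2 hτ), smul_eq_mul]
  field_simp

lemma st10_g_nonneg {p τ : ℝ} (hτ : 0 < τ) (z : ℝ) :
    0 ≤ τ * (1 + (τ * |z|) ^ p)⁻¹ := by
  have h0 : (0:ℝ) ≤ (τ * |z|) ^ p := Real.rpow_nonneg (by positivity) p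
  positivity

lemma st10_V_nonneg {a₀ x₀ e : ℝ} (ha₀ : 0 < a₀) (y : ℝ) :
    0 ≤ (if y ≤ x₀ then a₀ * |y| ^ e else a₀ * |x₀| ^ e) := by
  split <;> positivity

lemma st10_V_le {a₀ x₀ e : ℝ} (ha₀ : 0 < a₀) (hx₀ : x₀ ≤ -1) (he : e ≤ 0) (y : ℝ) :
    (if y ≤ x₀ then a₀ * |y| ^ e else a₀ * |x₀| ^ e) ≤ a₀ * |x₀| ^ e := by
  split
  · rename_i h
    have hx₀pos : 0 < |x₀| := by rw [abs_of_neg (by linarith)]; linarith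
    have hyx : |x₀| ≤ |y| := by
      rw [abs_of_neg (by linarith : x₀ < 0), abs_of_neg (by linarith : y < 0)]
      linarith
    exact mul_le_mul_of_nonneg_left
      (Real.rpow_le_rpow_of_nonpos hx₀pos hyx he) ha₀.le
  · exact le_rfl

lemma st10_V_meas (a₀ x₀ e : ℝ) :
    Measurable (fun y : ℝ => if y ≤ x₀ then a₀ * |y| ^ e else a₀ * |x₀| ^ e) := by
  refine Measurable.ite measurableSet_Iic ?_ measurable_const
  fun_prop

lemma st10_F_int {p τ a₀ x₀ e x : ℝ} (hp : 1 < p) (hτ : 0 < τ) (ha₀ : 0 < a₀)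
    (hx₀ : x₀ ≤ -1) (he : e ≤ 0) :
    Integrable (fun y : ℝ => (τ * (1 + (τ * |x - y|) ^ p)⁻¹) *
      (if y ≤ x₀ then a₀ * |y| ^ e else a₀ * |x₀| ^ e)) := by
  have hgx : Integrable (fun y : ℝ => τ * (1 + (τ * |x - y|) ^ p)⁻¹) :=
    (st10_g_int hp hτ).comp_sub_left x
  have := hgx.bdd_mul ((st10_V_meas a₀ x₀ e).aestronglyMeasurable)
    (c := a₀ * |x₀| ^ e) (Filter.Eventually.of_forall fun y => by
      rw [Real.norm_eq_abs, abs_of_nonneg (st10_V_nonneg ha₀ y)]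
      exact st10_V_le ha₀ hx₀ he y)
  simpa [mul_comm] using this

set_option maxHeartbeats 2000000 in
theorem statement_10 (α a₀ x₀ : ℝ) (hα : 0 < α) (hα1 : α < 1) (ha₀ : 0 < a₀)
    (hx₀ : x₀ ≤ -1) :
    ∃ c C : ℝ, 0 < c ∧ 0 < C ∧ ∀ t : ℝ, 0 < t →
      (∀ x : ℝ, x < 2 * x₀ →
        (∫ y, (t ^ (-(1 / (2 * α))) *
            (1 + (t ^ (-(1 / (2 * α))) * |x - y|) ^ (1 + 2 * α))⁻¹) *
          (if y ≤ x₀ then a₀ * |y| ^ (-(2 * α)) else a₀ * |x₀| ^ (-(2 * α)))) ≤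
        C * (1 + |x₀| ^ (-(2 * α)) * t) * a₀ * |x| ^ (-(2 * α))) ∧
      (∀ x : ℝ, x < x₀ →
        c * (t / (t ^ (1 / (2 * α) + 1) + 1)) * a₀ * |x| ^ (-(2 * α)) ≤
          ∫ y, (t ^ (-(1 / (2 * α))) *
              (1 + (t ^ (-(1 / (2 * α))) * |x - y|) ^ (1 + 2 * α))⁻¹) *
            (if y ≤ x₀ then a₀ * |y| ^ (-(2 * α)) else a₀ * |x₀| ^ (-(2 * α)))) := by
  have hp : 1 < 1 + 2 * α := by linarith
  set p : ℝ := 1 + 2 * α with hpdef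
  set e : ℝ := -(2 * α) with hedef
  have he : e ≤ 0 := by rw [hedef]; linarith
  set I : ℝ := ∫ u : ℝ, (1 + |u| ^ p)⁻¹ with hIdef
  have hI0 : 0 ≤ I := by
    rw [hIdef]
    apply integral_nonneg
    intro u
    have : (0:ℝ) ≤ |u| ^ p := Real.rpow_nonneg (abs_nonneg u) p
    positivity
  refine ⟨1/4, 4 * I + 2/α + 1, by norm_num, by positivity, fun t ht => ?_⟩
  set τ : ℝ := t ^ (-(1 / (2 * α))) with hτdef
  have hτ : 0 < τ := Real.rpow_pos_of_pos ht _
  constructor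
  · -- upper bound
    intro x hx
    have hx2 : x < -2 := by linarith
    have hxneg : x < 0 := by linarith
    have hxabs : 2 < |x| := by rw [abs_of_neg hxneg]; linarith
    have hxpos : (0:ℝ) < |x| := by linarith
    have hFint := st10_F_int (τ := τ) (a₀ := a₀) (x₀ := x₀) (x := x) hp hτ ha₀ hx₀ he
    have hgx : Integrable (fun y : ℝ => τ * (1 + (τ * |x - y|) ^ p)⁻¹) :=
      (st10_g_int hp hτ).comp_sub_left x
    have hgx_integral : (∫ y : ℝ, τ * (1 + (τ * |x - y|) ^ p)⁻¹) = I := by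
      rw [hIdef]
      calc (∫ y : ℝ, τ * (1 + (τ * |x - y|) ^ p)⁻¹)
          = ∫ z : ℝ, τ * (1 + (τ * |z|) ^ p)⁻¹ :=
            integral_sub_left_eq_self (fun z : ℝ => τ * (1 + (τ * |z|) ^ p)⁻¹) volume x
        _ = ∫ u : ℝ, (1 + |u| ^ p)⁻¹ := st10_g_integral hp hτ
    have hxe : (0:ℝ) ≤ |x| ^ e := Real.rpow_nonneg (abs_nonneg x) e
    have hA0 : (0:ℝ) ≤ a₀ * |x| ^ e := by positivity
    have hhalf : (|x| / 2) ^ e ≤ 4 * |x| ^ e := by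
      have h21 : ((2:ℝ)⁻¹) ^ e = ((2:ℝ) ^ e)⁻¹ := Real.inv_rpow (by norm_num) e
      have h22 : ((2:ℝ) ^ e)⁻¹ = (2:ℝ) ^ (-e) := by
        rw [← Real.rpow_neg (by norm_num)]
      have h23 : (2:ℝ) ^ (-e) ≤ 4 := by
        have : (2:ℝ) ^ (-e) ≤ 2 ^ (2:ℝ) :=
          Real.rpow_le_rpow_of_exponent_le one_le_two (by rw [hedef]; linarith)
        calc (2:ℝ) ^ (-e) ≤ 2 ^ (2:ℝ) := this
          _ = 4 := by
            rw [show (2:ℝ) = ((2:ℕ):ℝ) by norm_num, Real.rpow_natCast]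
            norm_num
      calc (|x| / 2) ^ e = |x| ^ e * ((2:ℝ)⁻¹) ^ e := by
            rw [div_eq_mul_inv, Real.mul_rpow (abs_nonneg x) (by norm_num)]
        _ = |x| ^ e * (2:ℝ) ^ (-e) := by rw [h21, h22]
        _ ≤ |x| ^ e * 4 := mul_le_mul_of_nonneg_left h23 hxe
        _ = 4 * |x| ^ e := by ring
    -- Piece A : integral over Iic (x/2)
    have hA : (∫ y in Iic (x / 2),
        (τ * (1 + (τ * |x - y|) ^ p)⁻¹) *
          (if y ≤ x₀ then a₀ * |y| ^ e else a₀ * |x₀| ^ e)) ≤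
        (4 * (a₀ * |x| ^ e)) * I := by
      have step1 : (∫ y in Iic (x / 2),
          (τ * (1 + (τ * |x - y|) ^ p)⁻¹) *
            (if y ≤ x₀ then a₀ * |y| ^ e else a₀ * |x₀| ^ e)) ≤
          ∫ y in Iic (x / 2), (4 * (a₀ * |x| ^ e)) * (τ * (1 + (τ * |x - y|) ^ p)⁻¹) := by
        apply setIntegral_mono_on hFint.integrableOn
          ((hgx.const_mul _).integrableOn) measurableSet_Iic
        intro y hy
        have hy2 : y ≤ x / 2 := hy
        have hyx₀ : y ≤ x₀ := by linarith
        have hyneg : y < 0 := by linarith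
        have hhx : |x| / 2 ≤ |y| := by
          rw [abs_of_neg hyneg, abs_of_neg hxneg]; linarith
        have hV : (if y ≤ x₀ then a₀ * |y| ^ e else a₀ * |x₀| ^ e) ≤
            4 * (a₀ * |x| ^ e) := by
          rw [if_pos hyx₀]
          calc a₀ * |y| ^ e ≤ a₀ * (|x| / 2) ^ e := by
                apply mul_le_mul_of_nonneg_left _ ha₀.le
                exact Real.rpow_le_rpow_of_nonpos (by positivity) hhx he
            _ ≤ a₀ * (4 * |x| ^ e) := mul_le_mul_of_nonneg_left hhalf ha₀.le
            _ = 4 * (a₀ * |x| ^ e) := by ring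
        calc (τ * (1 + (τ * |x - y|) ^ p)⁻¹) *
              (if y ≤ x₀ then a₀ * |y| ^ e else a₀ * |x₀| ^ e)
            ≤ (τ * (1 + (τ * |x - y|) ^ p)⁻¹) * (4 * (a₀ * |x| ^ e)) :=
              mul_le_mul_of_nonneg_left hV (st10_g_nonneg hτ _)
          _ = (4 * (a₀ * |x| ^ e)) * (τ * (1 + (τ * |x - y|) ^ p)⁻¹) := by ring
      have step2 : (∫ y in Iic (x / 2),
          (4 * (a₀ * |x| ^ e)) * (τ * (1 + (τ * |x - y|) ^ p)⁻¹)) ≤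
          ∫ y : ℝ, (4 * (a₀ * |x| ^ e)) * (τ * (1 + (τ * |x - y|) ^ p)⁻¹) := by
        apply setIntegral_le_integral (hgx.const_mul _)
        filter_upwards with y
        exact mul_nonneg (by positivity) (st10_g_nonneg hτ _)
      have step3 : (∫ y : ℝ, (4 * (a₀ * |x| ^ e)) * (τ * (1 + (τ * |x - y|) ^ p)⁻¹)) =
          (4 * (a₀ * |x| ^ e)) * I := by
        rw [integral_const_mul, hgx_integral]
      linarith
    -- Piece B : integral over Ioi (x/2)
    have hR : (0:ℝ) < -(x / 2) := by linarith
    have hτ1p : τ ^ (1 - p) = t := by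
      rw [hτdef, ← Real.rpow_mul ht.le, show -(1 / (2 * α)) * (1 - p) = 1 by
        rw [hpdef]; field_simp; ring, Real.rpow_one]
    have hpt : ∀ y ∈ Ioi (x / 2), τ * (1 + (τ * |x - y|) ^ p)⁻¹ ≤ t * (y - x) ^ (-p) := by
      intro y hy
      have hy2 : x / 2 < y := hy
      have hd : (0:ℝ) < y - x := by linarith
      have habs : |x - y| = y - x := by rw [abs_sub_comm, abs_of_pos hd]
      have hpow : (0:ℝ) < (τ * (y - x)) ^ p := Real.rpow_pos_of_pos (by positivity) p
      have h1 : τ * (1 + (τ * |x - y|) ^ p)⁻¹ ≤ τ * ((τ * (y - x)) ^ p)⁻¹ := by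
        rw [habs]
        apply mul_le_mul_of_nonneg_left _ hτ.le
        apply inv_anti₀ hpow
        linarith
      have h2 : τ * ((τ * (y - x)) ^ p)⁻¹ = t * (y - x) ^ (-p) := by
        rw [Real.mul_rpow hτ.le hd.le, Real.rpow_neg hd.le, mul_inv, ← mul_assoc]
        congr 1
        rw [← hτ1p, Real.rpow_sub hτ, Real.rpow_one, div_eq_mul_inv]
      linarith
    -- translation of the tail integral
    have hKint : Integrable (Set.indicator (Ioi (-(x / 2))) (fun u : ℝ => u ^ (-p))) :=
      (integrable_indicator_iff measurableSet_Ioi).2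
        (integrableOn_Ioi_rpow_of_lt (by linarith : -p < -1) hR)
    have hind : (fun y : ℝ =>
        Set.indicator (Ioi (-(x / 2))) (fun u : ℝ => u ^ (-p)) (y - x)) =
        Set.indicator (Ioi (x / 2)) (fun y : ℝ => (y - x) ^ (-p)) := by
      funext y
      simp only [Set.indicator_apply, mem_Ioi]
      by_cases h : x / 2 < y
      · rw [if_pos (by linarith), if_pos h]
      · rw [if_neg (by intro hc; exact h (by linarith)), if_neg h]
    have htint : IntegrableOn (fun y : ℝ => (y - x) ^ (-p)) (Ioi (x / 2)) := by
      have := hKint.comp_sub_right x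
      rw [hind] at this
      exact (integrable_indicator_iff measurableSet_Ioi).1 this
    have htval : (∫ y in Ioi (x / 2), (y - x) ^ (-p)) =
        ∫ u in Ioi (-(x / 2)), u ^ (-p) := by
      rw [← integral_indicator measurableSet_Ioi, ← hind,
        integral_sub_right_eq_self
          (Set.indicator (Ioi (-(x / 2))) (fun u : ℝ => u ^ (-p))) x,
        integral_indicator measurableSet_Ioi]
    have hIoiv : (∫ u in Ioi (-(x / 2)), u ^ (-p)) = (|x| / 2) ^ e / (2 * α) := by
      rw [integral_Ioi_rpow_of_lt (by linarith : -p < -1) hR]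
      rw [show -p + 1 = e by rw [hpdef, hedef]; ring,
        show -(x / 2) = |x| / 2 by rw [abs_of_neg hxneg]; ring]
      rw [hedef, neg_div_neg_eq]
    have hB : (∫ y in Ioi (x / 2),
        (τ * (1 + (τ * |x - y|) ^ p)⁻¹) *
          (if y ≤ x₀ then a₀ * |y| ^ e else a₀ * |x₀| ^ e)) ≤
        (a₀ * |x₀| ^ e) * ((2 / α) * (t * |x| ^ e)) := by
      have step1 : (∫ y in Ioi (x / 2),
          (τ * (1 + (τ * |x - y|) ^ p)⁻¹) *
            (if y ≤ x₀ then a₀ * |y| ^ e else a₀ * |x₀| ^ e)) ≤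
          ∫ y in Ioi (x / 2), (a₀ * |x₀| ^ e) * (τ * (1 + (τ * |x - y|) ^ p)⁻¹) := by
        apply setIntegral_mono_on hFint.integrableOn
          ((hgx.const_mul _).integrableOn) measurableSet_Ioi
        intro y _
        calc (τ * (1 + (τ * |x - y|) ^ p)⁻¹) *
              (if y ≤ x₀ then a₀ * |y| ^ e else a₀ * |x₀| ^ e)
            ≤ (τ * (1 + (τ * |x - y|) ^ p)⁻¹) * (a₀ * |x₀| ^ e) :=
              mul_le_mul_of_nonneg_left (st10_V_le ha₀ hx₀ he y) (st10_g_nonneg hτ _)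
          _ = (a₀ * |x₀| ^ e) * (τ * (1 + (τ * |x - y|) ^ p)⁻¹) := by ring
      have step2 : (∫ y in Ioi (x / 2),
          (a₀ * |x₀| ^ e) * (τ * (1 + (τ * |x - y|) ^ p)⁻¹)) =
          (a₀ * |x₀| ^ e) * ∫ y in Ioi (x / 2), τ * (1 + (τ * |x - y|) ^ p)⁻¹ := by
        rw [integral_const_mul]
      have step3 : (∫ y in Ioi (x / 2), τ * (1 + (τ * |x - y|) ^ p)⁻¹) ≤
          ∫ y in Ioi (x / 2), t * (y - x) ^ (-p) :=
        setIntegral_mono_on hgx.integrableOn (htint.const_mul t) measurableSet_Ioi hpt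
      have step4 : (∫ y in Ioi (x / 2), t * (y - x) ^ (-p)) ≤ (2 / α) * (t * |x| ^ e) := by
        rw [integral_const_mul, htval, hIoiv]
        calc t * ((|x| / 2) ^ e / (2 * α)) ≤ t * ((4 * |x| ^ e) / (2 * α)) := by
              gcongr
          _ = (2 / α) * (t * |x| ^ e) := by field_simp; ring
      have hVx₀ : (0:ℝ) ≤ a₀ * |x₀| ^ e := by positivity
      have htail0 : (0:ℝ) ≤ ∫ y in Ioi (x / 2), τ * (1 + (τ * |x - y|) ^ p)⁻¹ :=
        setIntegral_nonneg measurableSet_Ioi (fun y _ => st10_g_nonneg hτ _)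
      calc (∫ y in Ioi (x / 2),
            (τ * (1 + (τ * |x - y|) ^ p)⁻¹) *
              (if y ≤ x₀ then a₀ * |y| ^ e else a₀ * |x₀| ^ e))
          ≤ (a₀ * |x₀| ^ e) * ∫ y in Ioi (x / 2), τ * (1 + (τ * |x - y|) ^ p)⁻¹ := by
            rw [← step2]; exact step1
        _ ≤ (a₀ * |x₀| ^ e) * ((2 / α) * (t * |x| ^ e)) :=
            mul_le_mul_of_nonneg_left (le_trans step3 step4) hVx₀
    rw [← intervalIntegral.integral_Iic_add_Ioi (b := x / 2)
      hFint.integrableOn hFint.integrableOn]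
    have hB0 : (0:ℝ) ≤ |x₀| ^ e * t := by positivity
    have hα2 : (0:ℝ) < 2 / α := by positivity
    nlinarith [mul_nonneg hA0 hB0, mul_nonneg hI0 hA0,
      mul_nonneg (mul_nonneg hA0 hB0) hα2.le]
  · -- lower bound
    intro x hx
    have hxlt : x < -1 := lt_of_lt_of_le hx hx₀
    have hxneg : x < 0 := by linarith
    have hxabs : 1 < |x| := by rw [abs_of_neg hxneg]; linarith
    have hFint := st10_F_int (τ := τ) (a₀ := a₀) (x₀ := x₀) (x := x) hp hτ ha₀ hx₀ he
    have hFnonneg : ∀ y : ℝ, 0 ≤ (τ * (1 + (τ * |x - y|) ^ p)⁻¹) *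
        (if y ≤ x₀ then a₀ * |y| ^ e else a₀ * |x₀| ^ e) :=
      fun y => mul_nonneg (st10_g_nonneg hτ _) (st10_V_nonneg ha₀ y)
    set m : ℝ := (τ * (1 + τ ^ p)⁻¹) * (a₀ * (2 * |x|) ^ e) with hmdef
    have hτppos : (0:ℝ) < 1 + τ ^ p := by
      have := Real.rpow_nonneg hτ.le p; linarith
    have claim : ∀ y ∈ Icc (x - 1) x, m ≤ (τ * (1 + (τ * |x - y|) ^ p)⁻¹) *
        (if y ≤ x₀ then a₀ * |y| ^ e else a₀ * |x₀| ^ e) := by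
      intro y hy
      rcases hy with ⟨hy1, hy2⟩
      have hyneg : y < 0 := by linarith
      have habs : |x - y| ≤ 1 := by rw [abs_of_nonneg (by linarith)]; linarith
      have hg : τ * (1 + τ ^ p)⁻¹ ≤ τ * (1 + (τ * |x - y|) ^ p)⁻¹ := by
        apply mul_le_mul_of_nonneg_left _ hτ.le
        apply inv_anti₀
        · have : (0:ℝ) ≤ (τ * |x - y|) ^ p := Real.rpow_nonneg (by positivity) p
          linarith
        · have : (τ * |x - y|) ^ p ≤ τ ^ p := by
            apply Real.rpow_le_rpow (by positivity) _ (by linarith)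
            calc τ * |x - y| ≤ τ * 1 := by
                  exact mul_le_mul_of_nonneg_left habs hτ.le
              _ = τ := mul_one τ
          linarith
      have hyx₀ : y ≤ x₀ := by linarith
      have hV : a₀ * (2 * |x|) ^ e ≤
          (if y ≤ x₀ then a₀ * |y| ^ e else a₀ * |x₀| ^ e) := by
        rw [if_pos hyx₀]
        apply mul_le_mul_of_nonneg_left _ ha₀.le
        apply Real.rpow_le_rpow_of_nonpos _ _ he
        · rw [abs_of_neg hyneg]; linarith
        · rw [abs_of_neg hyneg, abs_of_neg hxneg]; linarith
      exact mul_le_mul hg hV (by positivity) (le_trans (by positivity) hg)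
    have h1 : m * (volume (Icc (x - 1) x)).toReal ≤
        ∫ y in Icc (x - 1) x, (τ * (1 + (τ * |x - y|) ^ p)⁻¹) *
          (if y ≤ x₀ then a₀ * |y| ^ e else a₀ * |x₀| ^ e) :=
      setIntegral_ge_of_const_le_real measurableSet_Icc
        (by rw [Real.volume_Icc]; exact ENNReal.ofReal_ne_top) claim
        hFint.integrableOn
    have hvol : (volume (Icc (x - 1) x)).toReal = 1 := by
      rw [Real.volume_Icc]
      norm_num
    rw [hvol, mul_one] at h1
    have h2 : (∫ y in Icc (x - 1) x, (τ * (1 + (τ * |x - y|) ^ p)⁻¹) *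
          (if y ≤ x₀ then a₀ * |y| ^ e else a₀ * |x₀| ^ e)) ≤
        ∫ y, (τ * (1 + (τ * |x - y|) ^ p)⁻¹) *
          (if y ≤ x₀ then a₀ * |y| ^ e else a₀ * |x₀| ^ e) :=
      setIntegral_le_integral hFint (Filter.Eventually.of_forall hFnonneg)
    refine le_trans (le_trans ?_ h1) h2
    -- arithmetic: 1/4 * (t / (s + 1)) * a₀ * |x| ^ e ≤ m
    have hs : (0:ℝ) < t ^ (1 / (2 * α) + 1) := Real.rpow_pos_of_pos ht _
    have hα' : α ≠ 0 := ne_of_gt hα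
    have hτp : τ ^ p = (t ^ (1 / (2 * α) + 1))⁻¹ := by
      rw [hτdef, ← Real.rpow_mul ht.le, ← Real.rpow_neg ht.le]
      congr 1
      rw [hpdef]
      field_simp
    have hτeq : τ = t / t ^ (1 / (2 * α) + 1) := by
      have h9 : t / t ^ (1 / (2 * α) + 1) = t ^ (1 - (1 / (2 * α) + 1)) := by
        rw [Real.rpow_sub ht, Real.rpow_one]
      rw [hτdef, h9]
      congr 1
      ring
    have hid : τ * (1 + τ ^ p)⁻¹ = t / (t ^ (1 / (2 * α) + 1) + 1) := by
      rw [hτp, hτeq]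
      have hs1 : t ^ (1 / (2 * α) + 1) + 1 ≠ 0 := by positivity
      field_simp
    have h2e : (1/4 : ℝ) ≤ 2 ^ e := by
      have : (2:ℝ) ^ (-2 : ℝ) ≤ 2 ^ e :=
        Real.rpow_le_rpow_of_exponent_le one_le_two (by rw [hedef]; linarith)
      calc (1/4 : ℝ) = 2 ^ (-2 : ℝ) := by
            rw [show (-2:ℝ) = ((-2 : ℤ) : ℝ) by norm_num, Real.rpow_intCast]
            norm_num
        _ ≤ 2 ^ e := this
    have hxe : (0:ℝ) ≤ |x| ^ e := Real.rpow_nonneg (abs_nonneg x) e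
    have hts : (0:ℝ) ≤ t / (t ^ (1 / (2 * α) + 1) + 1) := by positivity
    rw [hmdef, hid, show (2 * |x|) ^ e = 2 ^ e * |x| ^ e from
      Real.mul_rpow (by norm_num) (abs_nonneg x)]
    nlinarith [mul_nonneg (mul_nonneg (mul_nonneg (sub_nonneg.2 h2e) hts) ha₀.le) hxe]
end
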